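/- arXiv:1308.2530 — 7 statements merged into one kernel-verified Lean document; each statement's English description precedes it below -/
import Mathlib

section
/- Let U ⊂ ℝ² be open and let F = (F₁, F₂, F₃) : U → ℝ³ be differentiable with |F(y)| = 1 and F₃(y) ≠ 0 for every y ∈ U. Then at every point of U one has F · (∂₁F × ∂₂F) = (1/F₃) (∂₁F₁ ∂₂F₂ − ∂₂F₁ ∂₁F₂), where × denotes the cross product in ℝ³ and · the Euclidean inner product. -/
/-!
Differentiating `|F|² = 1` shows that `∂₁F` and `∂₂F` are orthogonal to `F`, so their cross
product is parallel to the unit vector `F`: `∂₁F × ∂₂F = (F · (∂₁F × ∂₂F)) F`. The third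
component of this identity is `∂₁F₁ ∂₂F₂ − ∂₂F₁ ∂₁F₂ = (F · (∂₁F × ∂₂F)) F₃`.
-/

open Filter Topology ContinuousLinearMap Matrix

theorem HasFDerivAt.dotProduct {𝕜 E ι : Type*} [NontriviallyNormedField 𝕜]
    [NormedAddCommGroup E] [NormedSpace 𝕜 E] [Fintype ι] {f g : E → ι → 𝕜}
    {f' g' : E →L[𝕜] ι → 𝕜} {y : E} (hf : HasFDerivAt f f' y) (hg : HasFDerivAt g g' y) :
    HasFDerivAt (fun x => f x ⬝ᵥ g x)
      (∑ i, (f y i • (proj i).comp g' + g y i • (proj i).comp f')) y :=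
  HasFDerivAt.fun_sum fun i _ =>
    (hasFDerivAt_pi'.1 hf i).fun_mul (hasFDerivAt_pi'.1 hg i)

theorem dotProduct_fderiv_eq_zero_of_eventually_dotProduct_self_eq
    {E ι : Type*} [NormedAddCommGroup E] [NormedSpace ℝ E] [Fintype ι]
    {F : E → ι → ℝ} {y : E} {c : ℝ} (hF : DifferentiableAt ℝ F y)
    (hc : ∀ᶠ x in 𝓝 y, F x ⬝ᵥ F x = c) (v : E) :
    F y ⬝ᵥ fderiv ℝ F y v = 0 := by
  have hzero := (hF.hasFDerivAt.dotProduct hF.hasFDerivAt).unique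
    ((hasFDerivAt_const c y).congr_of_eventuallyEq hc)
  have h := congrArg (fun L : E →L[ℝ] ℝ => L v) hzero
  simpa [dotProduct, ← two_mul, ← Finset.mul_sum] using h

theorem cross_eq_dotProduct_cross_smul {R : Type*} [CommRing R] {u a b : Fin 3 → R}
    (hu : u ⬝ᵥ u = 1) (ha : u ⬝ᵥ a = 0) (hb : u ⬝ᵥ b = 0) :
    a ⨯₃ b = (u ⬝ᵥ a ⨯₃ b) • u := by
  have hperp : u ⨯₃ (a ⨯₃ b) = 0 := by
    rw [cross_cross_eq_smul_sub_smul', hb, dotProduct_comm, ha, zero_smul, zero_smul, sub_zero]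
  have h := cross_cross_eq_smul_sub_smul' u u (a ⨯₃ b)
  rwa [hperp, map_zero, hu, one_smul, eq_comm, sub_eq_zero, eq_comm] at h

theorem dotProduct_cross_mul_apply_two {R : Type*} [CommRing R] {u a b : Fin 3 → R}
    (hu : u ⬝ᵥ u = 1) (ha : u ⬝ᵥ a = 0) (hb : u ⬝ᵥ b = 0) :
    (u ⬝ᵥ a ⨯₃ b) * u 2 = a 0 * b 1 - a 1 * b 0 := by
  have h := congrFun (cross_eq_dotProduct_cross_smul hu ha hb) 2
  simpa [cross_apply, eq_comm] using h

/-- Let `U ⊂ ℝ²` be open and `F : U → ℝ³` differentiable with `|F| = 1` and `F₃ ≠ 0` on `U`.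
Then at every point of `U` one has
`F · (∂₁F × ∂₂F) = (1/F₃)(∂₁F₁ ∂₂F₂ − ∂₂F₁ ∂₁F₂)`. -/
theorem dot_cross_eq_inv_F3_mul_det (U : Set (Fin 2 → ℝ)) (hU : IsOpen U)
    (F : (Fin 2 → ℝ) → (Fin 3 → ℝ))
    (hF : ∀ y ∈ U, DifferentiableAt ℝ F y)
    (hnorm : ∀ y ∈ U, ∑ i : Fin 3, (F y i) ^ 2 = 1)
    (hF3 : ∀ y ∈ U, F y 2 ≠ 0) :
    ∀ y ∈ U,
      (∑ i : Fin 3, F y i *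
          crossProduct (fderiv ℝ F y (Pi.single 0 1)) (fderiv ℝ F y (Pi.single 1 1)) i)
        = (1 / F y 2) *
            (fderiv ℝ F y (Pi.single 0 1) 0 * fderiv ℝ F y (Pi.single 1 1) 1
              - fderiv ℝ F y (Pi.single 1 1) 0 * fderiv ℝ F y (Pi.single 0 1) 1) := by
  intro y hy
  have hunit : ∀ x ∈ U, F x ⬝ᵥ F x = 1 := fun x hx => by
    simpa [dotProduct, sq] using hnorm x hx
  have horth := dotProduct_fderiv_eq_zero_of_eventually_dotProduct_self_eq (hF y hy)
    (eventually_of_mem (hU.mem_nhds hy) hunit)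
  have hdet := dotProduct_cross_mul_apply_two (hunit y hy) (horth (Pi.single 0 1))
    (horth (Pi.single 1 1))
  change F y ⬝ᵥ _ = _
  field_simp [hF3 y hy]
  linear_combination hdet
end

section
/- Let U ⊂ ℝ² be open, let F : U → ℝ² be of class C², and let h : ℝ² → ℝ² be of class C¹. Then at every point of U one has ∇ · ( cof(DF)ᵀ (h ∘ F) ) = ((∇ · h) ∘ F) · det DF, where the divergence on the left is taken row-wise of the ℝ²-valued function y ↦ cof(DF(y))ᵀ h(F(y)). -/
/-- The cofactor matrix of a real `2×2` matrix `M = [[m₁₁, m₁₂],[m₂₁, m₂₂]]`, namely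
`cof M = [[m₂₂, −m₂₁],[−m₁₂, m₁₁]]`, so that `Mᵀ * cof M = (det M) • 1`. -/
def cof2 (M : Matrix (Fin 2) (Fin 2) ℝ) : Matrix (Fin 2) (Fin 2) ℝ :=
  !![M 1 1, -(M 1 0); -(M 0 1), M 0 0]

/-- The Jacobian matrix of a map `F : ℝ² → ℝ²` at a point `y`. -/
noncomputable def jac2 (F : (Fin 2 → ℝ) → (Fin 2 → ℝ)) (y : Fin 2 → ℝ) :
    Matrix (Fin 2) (Fin 2) ℝ :=
  Matrix.of fun i j => fderiv ℝ F y (Pi.single j 1) i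

/-!
Write `A = cof(DF)ᵀ`, which is the adjugate of `DF`, and `g = h ∘ F`. The product rule gives
`∇ · (A g) = (∇ · A) · g + tr (A Dg)`, where `∇ · A` is the divergence of the columns of `A`.
The first term vanishes because second derivatives of `F` commute (Piola's identity), and by the
chain rule and `DF · adj DF = det DF · 1`,
`tr (adj DF · Dh(F) · DF) = tr (DF · adj DF · Dh(F)) = det DF · tr Dh(F)`.
-/

open Matrix

theorem transpose_cof2 (M : Matrix (Fin 2) (Fin 2) ℝ) : (cof2 M)ᵀ = M.adjugate := by
  rw [adjugate_fin_two, cof2]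
  ext i j
  fin_cases i <;> fin_cases j <;> rfl

theorem trace_adjugate_mul_mul_self {ι R : Type*} [Fintype ι] [DecidableEq ι] [CommRing R]
    (M N : Matrix ι ι R) : (M.adjugate * (N * M)).trace = N.trace * M.det := by
  rw [trace_mul_comm, Matrix.mul_assoc, mul_adjugate, Matrix.mul_smul, Matrix.mul_one, trace_smul,
    smul_eq_mul, mul_comm]

section Jacobian

variable {m n : ℕ}

noncomputable def jacobian (f : (Fin n → ℝ) → (Fin m → ℝ)) (y : Fin n → ℝ) :
    Matrix (Fin m) (Fin n) ℝ :=
  LinearMap.toMatrix' (fderiv ℝ f y : (Fin n → ℝ) →ₗ[ℝ] (Fin m → ℝ))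

theorem jacobian_apply (f : (Fin n → ℝ) → (Fin m → ℝ)) (y : Fin n → ℝ) (i : Fin m) (j : Fin n) :
    jacobian f y i j = fderiv ℝ f y (Pi.single j 1) i :=
  LinearMap.toMatrix'_apply _ _ _

theorem jac2_eq_jacobian (F : (Fin 2 → ℝ) → (Fin 2 → ℝ)) (y : Fin 2 → ℝ) :
    jac2 F y = jacobian F y := by
  ext i j
  rw [jacobian_apply]
  rfl

theorem trace_jacobian (f : (Fin n → ℝ) → (Fin n → ℝ)) (y : Fin n → ℝ) :
    (jacobian f y).trace = ∑ i, fderiv ℝ f y (Pi.single i 1) i := by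
  simp only [trace, diag_apply, jacobian_apply]

theorem jacobian_comp {l : ℕ} {g : (Fin m → ℝ) → (Fin l → ℝ)} {f : (Fin n → ℝ) → (Fin m → ℝ)}
    {y : Fin n → ℝ} (hg : DifferentiableAt ℝ g (f y)) (hf : DifferentiableAt ℝ f y) :
    jacobian (fun z => g (f z)) y = jacobian g (f y) * jacobian f y := by
  have hcomp : fderiv ℝ (fun z => g (f z)) y = (fderiv ℝ g (f y)).comp (fderiv ℝ f y) :=
    fderiv_comp y hg hf
  rw [jacobian, hcomp]
  exact LinearMap.toMatrix'_comp _ _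

theorem differentiableAt_jacobian_apply {f : (Fin n → ℝ) → (Fin m → ℝ)} {y : Fin n → ℝ}
    (hf : DifferentiableAt ℝ (fderiv ℝ f) y) (i : Fin m) (j : Fin n) :
    DifferentiableAt ℝ (fun z => jacobian f z i j) y := by
  simp only [jacobian_apply]
  fun_prop

theorem fderiv_jacobian_apply {f : (Fin n → ℝ) → (Fin m → ℝ)} {y : Fin n → ℝ}
    (hf : DifferentiableAt ℝ (fderiv ℝ f) y) (i : Fin m) (j : Fin n) (v : Fin n → ℝ) :
    fderiv ℝ (fun z => jacobian f z i j) y v = fderiv ℝ (fderiv ℝ f) y v (Pi.single j 1) i := by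
  simp only [jacobian_apply]
  rw [fderiv_apply (by fun_prop), fderiv_clm_apply hf (differentiableAt_const _)]
  simp

noncomputable def columnDivergence (A : (Fin n → ℝ) → Matrix (Fin n) (Fin m) ℝ) (y : Fin n → ℝ) :
    Fin m → ℝ :=
  fun k => ∑ i, fderiv ℝ (fun z => A z i k) y (Pi.single i 1)

theorem fderiv_apply_apply {f : (Fin n → ℝ) → (Fin m → ℝ)} {y : Fin n → ℝ}
    (hf : DifferentiableAt ℝ f y) (v : Fin n → ℝ) (i : Fin m) :
    fderiv ℝ f y v i = fderiv ℝ (fun z => f z i) y v := by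
  rw [fderiv_apply hf]
  rfl

theorem trace_jacobian_mulVec {A : (Fin n → ℝ) → Matrix (Fin n) (Fin m) ℝ}
    {g : (Fin n → ℝ) → (Fin m → ℝ)} {y : Fin n → ℝ}
    (hA : ∀ i k, DifferentiableAt ℝ (fun z => A z i k) y) (hg : DifferentiableAt ℝ g y) :
    (jacobian (fun z => A z *ᵥ g z) y).trace =
      columnDivergence A y ⬝ᵥ g y + (A y * jacobian g y).trace := by
  have hgk : ∀ k, DifferentiableAt ℝ (fun z => g z k) y := differentiableAt_pi.1 hg
  have hAg : ∀ i, DifferentiableAt ℝ (fun z => (A z *ᵥ g z) i) y := fun i => by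
    simp only [mulVec, dotProduct]
    fun_prop
  have product_rule : ∀ i v, fderiv ℝ (fun z => A z *ᵥ g z) y v i =
      ∑ k, (fderiv ℝ (fun z => A z i k) y v * g y k + A y i k * fderiv ℝ (fun z => g z k) y v) := by
    intro i v
    rw [fderiv_apply_apply (differentiableAt_pi.2 hAg)]
    simp only [mulVec, dotProduct]
    rw [fderiv_fun_sum (A := fun k z => A z i k * g z k) fun k _ => (hA i k).mul (hgk k)]
    simp only [_root_.sum_apply, fderiv_fun_mul (hA i _) (hgk _),
      _root_.add_apply, _root_.smul_apply, smul_eq_mul]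
    exact Finset.sum_congr rfl fun k _ => by ring
  rw [trace_jacobian]
  simp only [product_rule, Finset.sum_add_distrib, columnDivergence, dotProduct,
    Finset.sum_mul, trace, diag_apply, mul_apply, jacobian_apply, fderiv_apply_apply hg]
  rw [Finset.sum_comm]

end Jacobian

section Piola

variable {F : (Fin 2 → ℝ) → (Fin 2 → ℝ)} {y : Fin 2 → ℝ}

theorem differentiableAt_adjugate_jacobian_apply (hF : DifferentiableAt ℝ (fderiv ℝ F) y)
    (i k : Fin 2) : DifferentiableAt ℝ (fun z => (jacobian F z).adjugate i k) y := by
  have := differentiableAt_jacobian_apply hF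
  simp only [adjugate_fin_two]
  fin_cases i <;> fin_cases k <;> simp [this]

theorem columnDivergence_adjugate_jacobian (hF : ContDiffAt ℝ 2 F y) :
    columnDivergence (fun z => (jacobian F z).adjugate) y = 0 := by
  have hF' : DifferentiableAt ℝ (fderiv ℝ F) y :=
    (hF.fderiv_right le_rfl).differentiableAt one_ne_zero
  have hsymm : IsSymmSndFDerivAt ℝ F y := hF.isSymmSndFDerivAt (by simp)
  ext k
  simp only [columnDivergence, adjugate_fin_two, Fin.sum_univ_two]
  fin_cases k <;> simp [fderiv_jacobian_apply hF', hsymm (Pi.single 0 1)]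

end Piola

/-- Piola identity: if `U ⊂ ℝ²` is open, `F : U → ℝ²` is `C²` and `h : ℝ² → ℝ²` is `C¹`,
then `∇ · (cof(DF)ᵀ (h ∘ F)) = ((∇ · h) ∘ F) · det DF` on `U`,
the divergence on the left being taken row-wise. -/
theorem div_cof_transpose_comp (U : Set (Fin 2 → ℝ)) (hU : IsOpen U)
    (F : (Fin 2 → ℝ) → (Fin 2 → ℝ)) (hF : ContDiffOn ℝ 2 F U)
    (h : (Fin 2 → ℝ) → (Fin 2 → ℝ)) (hh : ContDiff ℝ 1 h) :
    ∀ y ∈ U,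
      (∑ i : Fin 2,
          fderiv ℝ (fun z => ((cof2 (jac2 F z)).transpose).mulVec (h (F z))) y (Pi.single i 1) i)
        = (∑ i : Fin 2, fderiv ℝ h (F y) (Pi.single i 1) i) * (jac2 F y).det := by
  intro y hy
  have hFy : ContDiffAt ℝ 2 F y := hF.contDiffAt (hU.mem_nhds hy)
  have hFd : DifferentiableAt ℝ F y := hFy.differentiableAt two_ne_zero
  have hF' : DifferentiableAt ℝ (fderiv ℝ F) y :=
    (hFy.fderiv_right le_rfl).differentiableAt one_ne_zero
  have hhd : DifferentiableAt ℝ h (F y) := hh.differentiable one_ne_zero (F y)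
  simp only [← trace_jacobian, jac2_eq_jacobian, transpose_cof2]
  rw [trace_jacobian_mulVec (g := fun z => h (F z)) (differentiableAt_adjugate_jacobian_apply hF')
      (hhd.comp y hFd),
    columnDivergence_adjugate_jacobian hFy, zero_dotProduct, zero_add, jacobian_comp hhd hFd,
    trace_adjugate_mul_mul_self]
end

section
/- Define G : ℝ × ℝ × [0, π/2) → ℝ² by G(r, r₁, β) = ( r cos β + 2 r sin²β · arcosh(1/ sin β) − r₁ cos β − (1 − r₁) sin β , (r + r₁) sin β − (1 − r₁) cos β ) for β ∈ (0, π/2), and G(r, r₁, 0) := (r − r₁, −(1 − r₁)) (the continuous extension, since sin²β · arcosh(1/sin β) → 0 as β → 0⁺). Then G(1,1,0) = 0, and there exist ε > 0 and functions r₁, β : (1−ε, 1] → ℝ of class C¹ (with one-sided derivatives at 1) such that: r₁(1) = 1, β(1) = 0; for every r ∈ (1−ε, 1) one has 0 < r₁(r) < 1, 0 < β(r) < π/2, and G(r, r₁(r), β(r)) = 0; and the derivatives at r = 1 satisfy r₁'(1) = 1 and β'(1) = −1/2. -/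
/-!
Solving the second component of `G = 0` for `r₁` gives `r₁ = (cos β - r sin β) / (sin β + cos β)`,
and substituting this into the first component leaves the single equation `r · F(β) = 1` with
`F(β) = cos 2β + sin 2β + 2 sin² β · arcosh (1 / sin β) · (sin β + cos β)`.
Since `arcosh (1 / sin β) = log (1 + cos β) - log (sin β)` and `t ↦ t² log t` is `C¹`, `F` is `C¹`
near `0` with `F 0 = 1` and `F' 0 = 2`. The inverse function theorem then gives `β(r) = F⁻¹(1 / r)`
with `β'(1) = -1/2`, hence `r₁'(1) = 1`; the signs of these derivatives put `β(r) > 0` and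
`r₁(r) < 1` for `r < 1` close to `1`.
-/

open Real

/-- The inverse hyperbolic cosine, `arcosh x = log (x + √(x² − 1))` for `x ≥ 1`. -/
noncomputable def arcosh (x : ℝ) : ℝ := Real.log (x + Real.sqrt (x ^ 2 - 1))

/-- The map `G(r, r₁, β)` encoding the matching conditions for a catenoid neck joining
two nested spheres of radii `1` and `r` inside the unit ball; at `β = 0` it is defined
by its continuous extension `G(r, r₁, 0) = (r − r₁, −(1 − r₁))`. -/
noncomputable def Gmatch (r r₁ β : ℝ) : ℝ × ℝ :=
  if β = 0 then (r - r₁, -(1 - r₁))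
  else
    (r * Real.cos β + 2 * r * Real.sin β ^ 2 * _root_.arcosh (1 / Real.sin β)
        - r₁ * Real.cos β - (1 - r₁) * Real.sin β,
      (r + r₁) * Real.sin β - (1 - r₁) * Real.cos β)

open Filter Set
open scoped Topology

theorem arcosh_one_div_sin {b : ℝ} (hs : 0 < sin b) (hc : 0 ≤ cos b) :
    _root_.arcosh (1 / sin b) = log (1 + cos b) - log (sin b) := by
  have hsq : (1 / sin b) ^ 2 - 1 = (cos b / sin b) ^ 2 := by
    field_simp
    linarith [sin_sq_add_cos_sq b]
  rw [_root_.arcosh, hsq, sqrt_sq (by positivity), ← add_div, log_div (by positivity) hs.ne']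

theorem hasDerivAt_sq_mul_log (t : ℝ) :
    HasDerivAt (fun t => t ^ 2 * log t) (2 * t * log t + t) t := by
  rcases eq_or_ne t 0 with rfl | ht
  · rw [hasDerivAt_iff_tendsto_slope]
    have hlim : Tendsto (fun t => t * log t) (𝓝[≠] 0) (𝓝 0) := by
      simpa using (continuous_mul_log.tendsto 0).mono_left nhdsWithin_le_nhds
    refine (hlim.congr' ?_).trans (by simp)
    filter_upwards [self_mem_nhdsWithin] with t (ht : t ≠ 0)
    rw [slope_def_field]
    field_simp
    ring
  · exact ((hasDerivAt_pow 2 t).mul (hasDerivAt_log ht)).congr_deriv (by field_simp; ring)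

theorem contDiff_sq_mul_log : ContDiff ℝ 1 (fun t => t ^ 2 * log t) := by
  rw [contDiff_one_iff_deriv]
  refine ⟨fun t => (hasDerivAt_sq_mul_log t).differentiableAt, ?_⟩
  rw [funext fun t => (hasDerivAt_sq_mul_log t).deriv]
  exact ((continuous_mul_log.const_mul 2).add continuous_id).congr fun t => by
    simp only [Pi.add_apply, id]
    ring

theorem ContDiffAt.exists_localInverse {𝕜 : Type*} [RCLike 𝕜] {f : 𝕜 → 𝕜} {f' a : 𝕜}
    {n : WithTop ℕ∞} (hf : ContDiffAt 𝕜 n f a) (hf' : HasDerivAt f f' a) (h0 : f' ≠ 0)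
    (hn : n ≠ 0) :
    ∃ g : 𝕜 → 𝕜, g (f a) = a ∧ (∀ᶠ y in 𝓝 (f a), f (g y) = y) ∧
      ContDiffAt 𝕜 n g (f a) ∧ HasDerivAt g f'⁻¹ (f a) := by
  have he : HasFDerivAt f
      (ContinuousLinearEquiv.unitsEquivAut 𝕜 (Units.mk0 f' h0) : 𝕜 →L[𝕜] 𝕜) a := hf'
  have hs := hf.hasStrictFDerivAt' he hn
  have hstrict : HasStrictDerivAt f f' a := hs
  exact ⟨hf.localInverse he hn, hf.localInverse_apply_image he hn, hs.eventually_right_inverse,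
    hf.to_localInverse he hn,
    (hstrict.to_local_left_inverse h0 hs.eventually_left_inverse).hasDerivAt⟩

theorem HasDerivAt.eventually_nhdsLT_lt {f : ℝ → ℝ} {f' a : ℝ} (hf : HasDerivAt f f' a)
    (hf' : 0 < f') : ∀ᶠ x in 𝓝[<] a, f x < f a := by
  have hslope := (hasDerivAt_iff_tendsto_slope.1 hf).eventually (eventually_gt_nhds hf')
  filter_upwards [nhdsLT_le_nhdsNE a hslope, self_mem_nhdsWithin] with x hx (hxa : x < a)
  exact (slope_pos_iff_gt hxa).1 hx

theorem HasDerivAt.eventually_nhdsLT_gt {f : ℝ → ℝ} {f' a : ℝ} (hf : HasDerivAt f f' a)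
    (hf' : f' < 0) : ∀ᶠ x in 𝓝[<] a, f a < f x := by
  simpa using hf.neg.eventually_nhdsLT_lt (neg_pos.2 hf')

theorem exists_Ioc_of_eventually {P Q : ℝ → Prop} {a : ℝ} (hP : ∀ᶠ x in 𝓝 a, P x)
    (hQ : ∀ᶠ x in 𝓝[<] a, Q x) :
    ∃ ε, 0 < ε ∧ (∀ x ∈ Ioc (a - ε) a, P x) ∧ ∀ x ∈ Ioo (a - ε) a, Q x := by
  obtain ⟨l, hl, hsub⟩ :=
    mem_nhdsLT_iff_exists_Ioo_subset.1 ((hP.filter_mono nhdsWithin_le_nhds).and hQ)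
  refine ⟨a - l, sub_pos.2 hl, fun x hx => ?_, fun x hx => (hsub (by simpa using hx)).2⟩
  rcases hx.2.lt_or_eq with hxa | rfl
  · exact (hsub ⟨by linarith [hx.1], hxa⟩).1
  · exact hP.self_of_nhds

noncomputable def matchRadius (r b : ℝ) : ℝ :=
  (cos b - r * sin b) / (sin b + cos b)

/-- Substituting `r₁ = matchRadius r β` turns `Gmatch r r₁ β = 0` into `r * matchFun β = 1`.
For `β < 0` it reads `log (sin β) = log |sin β|`, which makes `matchFun` `C¹` across `0`. -/
noncomputable def matchFun (b : ℝ) : ℝ :=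
  cos (2 * b) + sin (2 * b) + 2 * sin b ^ 2 * (log (1 + cos b) - log (sin b)) * (sin b + cos b)

theorem matchFun_zero : matchFun 0 = 1 := by
  simp [matchFun]

theorem contDiffAt_matchFun {b : ℝ} (hb : 1 + cos b ≠ 0) : ContDiffAt ℝ 1 matchFun b := by
  have hq : ContDiff ℝ 1 fun b => sin b ^ 2 * log (sin b) := contDiff_sq_mul_log.comp contDiff_sin
  have hl : ContDiffAt ℝ 1 (fun b => log (1 + cos b)) b :=
    (contDiffAt_const.add contDiff_cos.contDiffAt).log hb
  have h2 : ContDiff ℝ 1 fun b : ℝ => 2 * b := contDiff_const.mul contDiff_id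
  have h := ((contDiff_cos.comp h2).add (contDiff_sin.comp h2)).contDiffAt.add
    (((contDiffAt_const (c := (2 : ℝ))).mul
      (((contDiff_sin.pow 2).contDiffAt.mul hl).sub hq.contDiffAt)).mul
        (contDiff_sin.add contDiff_cos).contDiffAt)
  refine h.congr_of_eventuallyEq (.of_forall fun b => ?_)
  simp only [matchFun, Function.comp_apply]
  ring

theorem hasDerivAt_matchFun_zero : HasDerivAt matchFun 2 0 := by
  have hq := (hasDerivAt_sq_mul_log (sin 0)).comp 0 (hasDerivAt_sin 0)
  have hl := ((hasDerivAt_sin 0).pow 2).mul (((hasDerivAt_cos 0).const_add 1).log (by norm_num))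
  have h2 := (hasDerivAt_id (0 : ℝ)).const_mul 2
  have h := (h2.cos.add h2.sin).add
    (((hl.sub hq).const_mul 2).mul ((hasDerivAt_sin 0).add (hasDerivAt_cos 0)))
  refine (h.congr_deriv (by simp)).congr_of_eventuallyEq (.of_forall fun b => ?_)
  simp only [matchFun, Pi.add_apply, Pi.mul_apply, Pi.sub_apply, Pi.pow_apply,
    Function.comp_apply, id]
  ring

theorem Gmatch_matchRadius_eq_zero {r b : ℝ} (hb0 : 0 < b) (hb1 : b < π / 2)
    (h : r * matchFun b = 1) : Gmatch r (matchRadius r b) b = 0 := by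
  have hs : 0 < sin b := sin_pos_of_pos_of_lt_pi hb0 (by linarith [pi_pos])
  have hc : 0 < cos b := cos_pos_of_mem_Ioo ⟨by linarith [pi_pos], hb1⟩
  have hd : sin b + cos b ≠ 0 := by positivity
  rw [matchFun, cos_two_mul, sin_two_mul] at h
  rw [Gmatch, if_neg hb0.ne', arcosh_one_div_sin hs hc.le, matchRadius]
  simp only [Prod.ext_iff, Prod.fst_zero, Prod.snd_zero]
  constructor
  · field_simp
    linear_combination h - (1 + r) * sin_sq_add_cos_sq b
  · field_simp
    ring

theorem contDiffAt_matchRadius_comp {β : ℝ → ℝ} {a : ℝ} {n : WithTop ℕ∞}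
    (hβ : ContDiffAt ℝ n β a) (h : sin (β a) + cos (β a) ≠ 0) :
    ContDiffAt ℝ n (fun r => matchRadius r (β r)) a :=
  (hβ.cos.sub (contDiffAt_id.mul hβ.sin)).div (hβ.sin.add hβ.cos) h

theorem hasDerivAt_matchRadius_comp {β : ℝ → ℝ} (hβ : HasDerivAt β (-(1 / 2)) 1)
    (hβ1 : β 1 = 0) : HasDerivAt (fun r => matchRadius r (β r)) 1 1 := by
  have hs := hβ.sin
  have hc := hβ.cos
  rw [hβ1] at hs hc
  have h := (hc.sub ((hasDerivAt_id 1).mul hs)).div (hs.add hc) (by simp [hβ1])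
  refine h.congr_deriv ?_
  norm_num [hβ1]

theorem eventually_nhdsLT_matching {β : ℝ → ℝ} (hβ : HasDerivAt β (-(1 / 2)) 1) (hβ1 : β 1 = 0)
    (hF : ∀ᶠ r in 𝓝 1, r * matchFun (β r) = 1) :
    ∀ᶠ r in 𝓝[<] 1, 0 < matchRadius r (β r) ∧ matchRadius r (β r) < 1 ∧ 0 < β r ∧
      β r < π / 2 ∧ Gmatch r (matchRadius r (β r)) (β r) = 0 := by
  have hR := hasDerivAt_matchRadius_comp hβ hβ1
  have hR1 : matchRadius 1 (β 1) = 1 := by simp [matchRadius, hβ1]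
  have hRpos : ∀ᶠ r in 𝓝 1, 0 < matchRadius r (β r) :=
    hR.continuousAt.eventually (eventually_gt_nhds (by simp only [hR1]; exact one_pos))
  have hβlt : ∀ᶠ r in 𝓝 1, β r < π / 2 :=
    hβ.continuousAt.eventually (eventually_lt_nhds (by simp only [hβ1]; positivity))
  filter_upwards [hβ.eventually_nhdsLT_gt (by norm_num), hR.eventually_nhdsLT_lt one_pos,
    nhdsWithin_le_nhds (hRpos.and (hβlt.and hF))] with r hβpos hRlt ⟨hRpos, hβlt, hr⟩
  rw [hβ1] at hβpos
  rw [hR1] at hRlt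
  exact ⟨hRpos, hRlt, hβpos, hβlt, Gmatch_matchRadius_eq_zero hβpos hβlt hr⟩

theorem exists_matching_angle :
    ∃ β : ℝ → ℝ, β 1 = 0 ∧ HasDerivAt β (-(1 / 2)) 1 ∧ ContDiffAt ℝ 1 β 1 ∧
      ∀ᶠ r in 𝓝 1, r * matchFun (β r) = 1 := by
  obtain ⟨g, hg1, hgF, hgC, hgD⟩ := (contDiffAt_matchFun (by norm_num)).exists_localInverse
    hasDerivAt_matchFun_zero two_ne_zero one_ne_zero
  rw [matchFun_zero] at hg1 hgF hgC hgD
  have hinv : Tendsto (fun r : ℝ => r⁻¹) (𝓝 1) (𝓝 1) := by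
    simpa using tendsto_inv₀ (one_ne_zero (α := ℝ))
  refine ⟨fun r => g r⁻¹, by simpa using hg1, ?_,
    (inv_one (G := ℝ) ▸ hgC).comp 1 (contDiffAt_inv ℝ one_ne_zero), ?_⟩
  · refine ((inv_one (G := ℝ) ▸ hgD).comp 1 (hasDerivAt_inv one_ne_zero)).congr_deriv ?_
    norm_num
  · filter_upwards [hinv.eventually hgF, eventually_ne_nhds one_ne_zero] with r hr hr0
    rw [hr, mul_inv_cancel₀ hr0]

/-- `G(1,1,0) = 0`, and there are `ε > 0` and `C¹` functions `r₁, β : (1−ε, 1] → ℝ`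
(with one-sided derivatives at `1`) such that `r₁(1) = 1`, `β(1) = 0`, and for every
`r ∈ (1−ε, 1)` one has `0 < r₁(r) < 1`, `0 < β(r) < π/2` and `G(r, r₁(r), β(r)) = 0`;
moreover `r₁'(1) = 1` and `β'(1) = −1/2`. -/
theorem implicit_solution_of_matching :
    Gmatch 1 1 0 = 0 ∧
    ∃ ε : ℝ, 0 < ε ∧
      ∃ r₁ β : ℝ → ℝ,
        ContDiffOn ℝ 1 r₁ (Set.Ioc (1 - ε) 1) ∧
        ContDiffOn ℝ 1 β (Set.Ioc (1 - ε) 1) ∧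
        r₁ 1 = 1 ∧ β 1 = 0 ∧
        (∀ r ∈ Set.Ioo (1 - ε) 1,
          0 < r₁ r ∧ r₁ r < 1 ∧ 0 < β r ∧ β r < π / 2 ∧ Gmatch r (r₁ r) (β r) = 0) ∧
        HasDerivWithinAt r₁ 1 (Set.Ioc (1 - ε) 1) 1 ∧
        HasDerivWithinAt β (-(1 / 2)) (Set.Ioc (1 - ε) 1) 1 := by
  refine ⟨by simp [Gmatch], ?_⟩
  obtain ⟨β, hβ1, hβ, hβC, hF⟩ := exists_matching_angle
  have hRC := contDiffAt_matchRadius_comp hβC (by simp [hβ1])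
  obtain ⟨ε, hε, hC, hQ⟩ := exists_Ioc_of_eventually
    ((hβC.eventually (by simp)).and (hRC.eventually (by simp)))
    (eventually_nhdsLT_matching hβ hβ1 hF)
  exact ⟨ε, hε, fun r => matchRadius r (β r), β, fun r hr => (hC r hr).2.contDiffWithinAt,
    fun r hr => (hC r hr).1.contDiffWithinAt, by simp [matchRadius, hβ1], hβ1, hQ,
    (hasDerivAt_matchRadius_comp hβ hβ1).hasDerivWithinAt, hβ.hasDerivWithinAt⟩
end

section
/- Let ε > 0 and let r₁, β : (1−ε, 1] → ℝ be C¹ functions (with one-sided derivatives at 1) satisfying r₁(1) = 1, β(1) = 0, r₁'(1) = 1, β'(1) = −1/2, and 0 < β(r) < π/2 for r ∈ (1−ε, 1). Define A : (1−ε, 1] → ℝ by A(r) = 2π [ (1 − r₁(r)²) sin β(r) + r₁(r)(1 − r₁(r)) (π/2) cos β(r) + (r₁(r)² + r²) cos β(r) + r² sin²β(r) cos β(r) + r² sin⁴β(r) · arcosh(1/ sin β(r)) ], where the last term is interpreted as 0 when β(r) = 0. Then A(1) = 4π, A is differentiable at r = 1 (one-sided), and A'(1) > 0. -/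
/-!
The arcosh term is the only non-smooth one: for `0 < u ≤ 1` one has
`0 ≤ u⁴ arcosh(1/u) ≤ 2u³`, so `u ↦ u⁴ arcosh(1/u)` has derivative `0` at `u = 0⁺`,
and composing with `sin ∘ β` kills its contribution to `A'(1)`. The remaining terms are
smooth and, using `r₁(1) = 1`, `sin β(1) = 0`, `cos β(1) = 1`, contribute
`A'(1) = 2π(4 − π/2) > 0`.
-/

open Real

open Set Filter Topology Asymptotics

lemma arcosh_eq_real_arcosh : _root_.arcosh = Real.arcosh := rfl

lemma Real.arcosh_le_two_mul {x : ℝ} (hx : 1 ≤ x) : Real.arcosh x ≤ 2 * x := by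
  have hsqrt : √(x ^ 2 - 1) ≤ x := by
    rw [Real.sqrt_le_left (by linarith)]
    linarith
  calc Real.arcosh x ≤ x + √(x ^ 2 - 1) := Real.log_le_self (by positivity)
    _ ≤ 2 * x := by linarith

lemma abs_pow_four_mul_arcosh_inv_le {u : ℝ} (hu : u ∈ Icc (0 : ℝ) 1) :
    |u ^ 4 * Real.arcosh (1 / u)| ≤ 2 * |u| ^ 3 := by
  obtain ⟨hu0, hu1⟩ := hu
  rcases hu0.eq_or_lt with rfl | hpos
  · simp
  have hinv : 1 ≤ 1 / u := by rw [le_div_iff₀ hpos]; linarith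
  rw [abs_of_nonneg (mul_nonneg (by positivity) (arcosh_nonneg hinv)), abs_of_pos hpos]
  calc u ^ 4 * Real.arcosh (1 / u) ≤ u ^ 4 * (2 * (1 / u)) := by
        gcongr; exact arcosh_le_two_mul hinv
    _ = 2 * u ^ 3 := by field_simp

lemma hasDerivWithinAt_pow_four_mul_arcosh_inv :
    HasDerivWithinAt (fun u => u ^ 4 * Real.arcosh (1 / u)) 0 (Icc 0 1) 0 := by
  refine HasDerivWithinAt.of_isLittleO ?_
  simp only [sub_zero, smul_zero, zero_pow four_ne_zero, zero_mul]
  have hbigO : (fun u : ℝ => u ^ 4 * Real.arcosh (1 / u)) =O[𝓝[Icc 0 1] 0] fun u => u ^ 3 :=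
    IsBigO.of_bound 2 <| eventually_nhdsWithin_of_forall fun u hu => by
      simpa [Real.norm_eq_abs, abs_pow] using abs_pow_four_mul_arcosh_inv_le hu
  refine hbigO.trans_isLittleO ?_
  simpa using (isLittleO_pow_pow (𝕜 := ℝ) (by norm_num : 1 < 3)).mono nhdsWithin_le_nhds

lemma mapsTo_sin_Icc_zero_pi : MapsTo sin (Icc 0 π) (Icc 0 1) :=
  fun _ hx => ⟨sin_nonneg_of_nonneg_of_le_pi hx.1 hx.2, sin_le_one _⟩

theorem area_of_neck_construction_general (ε : ℝ) (hε : 0 < ε) (r₁ β : ℝ → ℝ)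
    (hr₁1 : r₁ 1 = 1) (hβ1 : β 1 = 0)
    (hr₁' : HasDerivWithinAt r₁ 1 (Set.Ioc (1 - ε) 1) 1)
    (hβ' : HasDerivWithinAt β (-(1 / 2)) (Set.Ioc (1 - ε) 1) 1)
    (hβrange : ∀ r ∈ Set.Ioo (1 - ε) 1, 0 < β r ∧ β r < π / 2)
    (A : ℝ → ℝ)
    (hA : ∀ r ∈ Set.Ioc (1 - ε) 1,
      A r = 2 * π *
        ((1 - r₁ r ^ 2) * Real.sin (β r)
          + r₁ r * (1 - r₁ r) * (π / 2) * Real.cos (β r)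
          + (r₁ r ^ 2 + r ^ 2) * Real.cos (β r)
          + r ^ 2 * Real.sin (β r) ^ 2 * Real.cos (β r)
          + r ^ 2 * Real.sin (β r) ^ 4 * _root_.arcosh (1 / Real.sin (β r)))) :
    A 1 = 4 * π ∧
    ∃ A' : ℝ, HasDerivWithinAt A A' (Set.Ioc (1 - ε) 1) 1 ∧ 0 < A' := by
  simp only [arcosh_eq_real_arcosh] at hA
  set s := Ioc (1 - ε) 1
  have h1s : (1 : ℝ) ∈ s := ⟨by linarith, le_rfl⟩
  have hsin : HasDerivWithinAt (fun r => sin (β r)) (-(1 / 2)) s 1 := by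
    simpa [hβ1] using hβ'.sin
  have hcos : HasDerivWithinAt (fun r => cos (β r)) 0 s 1 := by simpa [hβ1] using hβ'.cos
  have hβ_mem : MapsTo β s (Icc 0 π) := by
    intro r hr
    rcases hr.2.eq_or_lt with rfl | hlt
    · simp [hβ1, pi_pos.le]
    · obtain ⟨h0, hβlt⟩ := hβrange r ⟨hr.1, hlt⟩
      exact ⟨h0.le, by linarith [pi_pos]⟩
  have htail :
      HasDerivWithinAt (fun r => sin (β r) ^ 4 * Real.arcosh (1 / sin (β r))) 0 s 1 := by
    have := hasDerivWithinAt_pow_four_mul_arcosh_inv.comp_of_eq 1 hsin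
      (mapsTo_sin_Icc_zero_pi.comp hβ_mem) (by simp [hβ1])
    simpa [Function.comp_def] using this
  have hr₁sq := hr₁'.fun_pow 2
  have hrsq := (hasDerivWithinAt_id 1 s).fun_pow 2
  have hF := ((((((hr₁sq.const_sub 1).fun_mul hsin).fun_add
    (((hr₁'.fun_mul (hr₁'.const_sub 1)).mul_const (π / 2)).fun_mul hcos)).fun_add
    ((hr₁sq.fun_add hrsq).fun_mul hcos)).fun_add
    ((hrsq.fun_mul (hsin.fun_pow 2)).fun_mul hcos)).fun_add
    (hrsq.fun_mul htail)).const_mul (2 * π)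
  have hA' : HasDerivWithinAt A _ s 1 :=
    hF.congr_of_mem (fun r hr => by rw [hA r hr]; simp only [id]; ring) h1s
  refine ⟨by rw [hA 1 h1s]; simp [hβ1, hr₁1]; ring, 2 * π * (4 - π / 2), ?_, ?_⟩
  · convert hA' using 1
    simp [hβ1, hr₁1]
    ring
  · nlinarith [pi_pos, pi_lt_d2]

/-- If `r₁, β : (1−ε, 1] → ℝ` are `C¹` with `r₁(1) = 1`, `β(1) = 0`, `r₁'(1) = 1`,
`β'(1) = −1/2` (one-sided derivatives at `1`) and `0 < β(r) < π/2` on `(1−ε, 1)`, then the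
total area function
`A(r) = 2π[(1 − r₁²) sin β + r₁(1 − r₁)(π/2) cos β + (r₁² + r²) cos β + r² sin²β cos β
 + r² sin⁴β arcosh(1/sin β)]`
satisfies `A(1) = 4π`, is one-sidedly differentiable at `r = 1`, and `A'(1) > 0`. -/
theorem area_of_neck_construction (ε : ℝ) (hε : 0 < ε) (r₁ β : ℝ → ℝ)
    (hr₁ : ContDiffOn ℝ 1 r₁ (Set.Ioc (1 - ε) 1))
    (hβ : ContDiffOn ℝ 1 β (Set.Ioc (1 - ε) 1))
    (hr₁1 : r₁ 1 = 1) (hβ1 : β 1 = 0)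
    (hr₁' : HasDerivWithinAt r₁ 1 (Set.Ioc (1 - ε) 1) 1)
    (hβ' : HasDerivWithinAt β (-(1 / 2)) (Set.Ioc (1 - ε) 1) 1)
    (hβrange : ∀ r ∈ Set.Ioo (1 - ε) 1, 0 < β r ∧ β r < π / 2)
    (A : ℝ → ℝ)
    (hA : ∀ r ∈ Set.Ioc (1 - ε) 1,
      A r = 2 * π *
        ((1 - r₁ r ^ 2) * Real.sin (β r)
          + r₁ r * (1 - r₁ r) * (π / 2) * Real.cos (β r)
          + (r₁ r ^ 2 + r ^ 2) * Real.cos (β r)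
          + r ^ 2 * Real.sin (β r) ^ 2 * Real.cos (β r)
          + r ^ 2 * Real.sin (β r) ^ 4 * _root_.arcosh (1 / Real.sin (β r)))) :
    A 1 = 4 * π ∧
    ∃ A' : ℝ, HasDerivWithinAt A A' (Set.Ioc (1 - ε) 1) 1 ∧ 0 < A' :=
  area_of_neck_construction_general ε hε r₁ β hr₁1 hβ1 hr₁' hβ' hβrange A hA
end

section
/- Let η ∈ C_c^∞(−1, 1) be symmetric (η(−x) = η(x) for all x), and let α > 0. For s ∈ (0, 1/2] set t := α s², and for r ∈ (0, s) define g(r) := √( 1 + ψ'(r)² ) where ψ(r) := √(1 − r²) − t η(r/s), and define H(r) := g(r)^{-3} [ 2(1 − r²)^{-3/2} + (t/s²) η''(r/s) + (t/s)(1/r) η'(r/s) + 3 (t/s) (r/(1 − r²)) η'(r/s) + 3 (t²/s²) (1 − r²)^{-1/2} η'(r/s)² + (t³/s³)(1/r) η'(r/s)³ ]. Then there exists a constant C depending only on η and α such that |H(r)| ≤ C for all s ∈ (0, 1/2] and all r ∈ (0, s). -/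
open Real

set_option maxHeartbeats 2000000 in
/-- Uniform bound on the mean curvature of the perturbed hemisphere profile: if
`η ∈ C_c^∞(−1,1)` is symmetric and `α > 0`, then, with `t = αs²`,
`ψ(r) = √(1 − r²) − t η(r/s)` and `g(r) = √(1 + ψ'(r)²)`, the quantity
`H(r) = g(r)⁻³ [2(1 − r²)^{−3/2} + (t/s²)η''(r/s) + (t/s)(1/r)η'(r/s)
 + 3(t/s)(r/(1 − r²))η'(r/s) + 3(t²/s²)(1 − r²)^{−1/2}η'(r/s)² + (t³/s³)(1/r)η'(r/s)³]`
is bounded by a constant depending only on `η` and `α`, uniformly over `s ∈ (0, 1/2]`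
and `r ∈ (0, s)`. -/
theorem mean_curvature_bound (η : ℝ → ℝ) (hη : ContDiff ℝ (⊤ : ℕ∞) η)
    (hηsupp : HasCompactSupport η) (hηsupp' : tsupport η ⊆ Set.Ioo (-1 : ℝ) 1)
    (hsym : ∀ x, η (-x) = η x) (α : ℝ) (hα : 0 < α) :
    ∃ C : ℝ, ∀ s ∈ Set.Ioc (0 : ℝ) (1 / 2), ∀ r ∈ Set.Ioo (0 : ℝ) s,
      (fun t =>
        (fun ψ =>
          (fun g =>
            |(2 * (1 - r ^ 2) ^ (-(3 : ℝ) / 2)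
              + (t / s ^ 2) * deriv (deriv η) (r / s)
              + (t / s) * (1 / r) * deriv η (r / s)
              + 3 * (t / s) * (r / (1 - r ^ 2)) * deriv η (r / s)
              + 3 * (t ^ 2 / s ^ 2) * (1 - r ^ 2) ^ (-(1 : ℝ) / 2) * deriv η (r / s) ^ 2
              + (t ^ 3 / s ^ 3) * (1 / r) * deriv η (r / s) ^ 3) / g ^ 3| ≤ C)
          (Real.sqrt (1 + deriv ψ r ^ 2)))
        (fun x : ℝ => Real.sqrt (1 - x ^ 2) - t * η (x / s)))
      (α * s ^ 2) := by
  -- smoothness of derivatives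
  have hη' : ContDiff ℝ ((⊤ : ℕ∞) : WithTop ℕ∞) η := hη.of_le (by simp)
  have hη1 : ContDiff ℝ ((⊤ : ℕ∞) : WithTop ℕ∞) (deriv η) := (contDiff_infty_iff_deriv.mp hη').2
  have hη2cont : Continuous (deriv (deriv η)) :=
    ((contDiff_infty_iff_deriv.mp hη1).2).continuous
  have hη1diff : Differentiable ℝ (deriv η) := (contDiff_infty_iff_deriv.mp hη1).1
  -- bounds on derivatives
  obtain ⟨M₁, hM₁⟩ :=
    (hηsupp.deriv).exists_bound_of_continuous hη1.continuous
  obtain ⟨M₂, hM₂⟩ :=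
    (hηsupp.deriv.deriv).exists_bound_of_continuous hη2cont
  have hM₁0 : 0 ≤ M₁ := le_trans (norm_nonneg _) (hM₁ 0)
  have hM₂0 : 0 ≤ M₂ := le_trans (norm_nonneg _) (hM₂ 0)
  -- deriv η 0 = 0 by symmetry
  have hd0 : deriv η 0 = 0 := by
    have h1 : (fun x : ℝ => η (-x)) = η := funext hsym
    have h2 : deriv (fun x : ℝ => η (-x)) 0 = -deriv η (-0) := deriv_comp_neg η 0
    rw [h1, neg_zero] at h2
    linarith
  -- |deriv η y| ≤ M₂ * |y|
  have hlin : ∀ y : ℝ, |deriv η y| ≤ M₂ * |y| := by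
    intro y
    have := Convex.norm_image_sub_le_of_norm_deriv_le
      (f := deriv η) (s := Set.univ) (fun x _ => hη1diff x)
      (fun x _ => hM₂ x) convex_univ (Set.mem_univ 0) (Set.mem_univ y)
    simpa [hd0, Real.norm_eq_abs] using this
  refine ⟨4 + 2 * α * M₂ + 3 * α * M₁ + 6 * α ^ 2 * M₁ ^ 2 + α ^ 3 * M₁ ^ 2 * M₂,
    fun s hs r hr => ?_⟩
  obtain ⟨hs0, hs2⟩ := hs
  obtain ⟨hr0, hrs⟩ := hr
  beta_reduce
  set t := α * s ^ 2 with ht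
  set d := deriv η (r / s) with hd
  set d2 := deriv (deriv η) (r / s) with hd2
  set g := Real.sqrt (1 + deriv (fun x : ℝ => Real.sqrt (1 - x ^ 2) - t * η (x / s)) r ^ 2)
    with hg
  have hr12 : r < 1 / 2 := lt_of_lt_of_le hrs hs2
  have hA34 : (3 : ℝ) / 4 ≤ 1 - r ^ 2 := by nlinarith
  have hA0 : (0 : ℝ) < 1 - r ^ 2 := by linarith
  have hA1 : 1 - r ^ 2 ≤ 1 := by nlinarith
  -- g ≥ 1
  have hg1 : (1 : ℝ) ≤ g := by
    rw [hg]
    have h : (1 : ℝ) ≤ 1 + deriv (fun x : ℝ => Real.sqrt (1 - x ^ 2) - t * η (x / s)) r ^ 2 :=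
      le_add_of_nonneg_right (sq_nonneg _)
    have h2 := Real.sqrt_le_sqrt h
    rwa [Real.sqrt_one] at h2
  have hg3 : (1 : ℝ) ≤ g ^ 3 := one_le_pow₀ hg1
  -- rpow bounds
  have hP1 : (1 - r ^ 2) ^ (-(3 : ℝ) / 2) ≤ 2 := by
    have h1 : (1 - r ^ 2) ^ ((2 : ℝ)) ≤ (1 - r ^ 2) ^ ((3 : ℝ) / 2) :=
      Real.rpow_le_rpow_of_exponent_ge hA0 hA1 (by norm_num)
    have h2 : (1 - r ^ 2) ^ (-(3 : ℝ) / 2) = ((1 - r ^ 2) ^ ((3 : ℝ) / 2))⁻¹ := by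
      rw [← Real.rpow_neg hA0.le]; norm_num
    have h3 : (1 - r ^ 2) ^ ((2 : ℝ)) = (1 - r ^ 2) ^ (2 : ℕ) := by
      rw [← Real.rpow_natCast]; norm_num
    have h4 : (9 : ℝ) / 16 ≤ (1 - r ^ 2) ^ (2 : ℕ) := by nlinarith
    rw [h2]
    have h5 : (9 : ℝ) / 16 ≤ (1 - r ^ 2) ^ ((3 : ℝ) / 2) := by
      rw [h3] at h1; linarith
    have h6 : ((1 - r ^ 2) ^ ((3 : ℝ) / 2))⁻¹ ≤ (9 / 16 : ℝ)⁻¹ :=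
      inv_anti₀ (by norm_num) h5
    refine h6.trans (by norm_num)
  have hP2 : (1 - r ^ 2) ^ (-(1 : ℝ) / 2) ≤ 2 := by
    have h1 : (1 - r ^ 2) ^ ((1 : ℝ)) ≤ (1 - r ^ 2) ^ ((1 : ℝ) / 2) :=
      Real.rpow_le_rpow_of_exponent_ge hA0 hA1 (by norm_num)
    have h2 : (1 - r ^ 2) ^ (-(1 : ℝ) / 2) = ((1 - r ^ 2) ^ ((1 : ℝ) / 2))⁻¹ := by
      rw [← Real.rpow_neg hA0.le]; norm_num
    have h3 : (1 - r ^ 2) ^ ((1 : ℝ)) = 1 - r ^ 2 := Real.rpow_one _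
    have h5 : (3 : ℝ) / 4 ≤ (1 - r ^ 2) ^ ((1 : ℝ) / 2) := by
      rw [h3] at h1; linarith
    rw [h2]
    have h6 : ((1 - r ^ 2) ^ ((1 : ℝ) / 2))⁻¹ ≤ (3 / 4 : ℝ)⁻¹ :=
      inv_anti₀ (by norm_num) h5
    refine h6.trans (by norm_num)
  have hP10 : (0 : ℝ) < (1 - r ^ 2) ^ (-(3 : ℝ) / 2) := Real.rpow_pos_of_pos hA0 _
  have hP20 : (0 : ℝ) < (1 - r ^ 2) ^ (-(1 : ℝ) / 2) := Real.rpow_pos_of_pos hA0 _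
  -- derivative bounds at r/s
  have hdM : |d| ≤ M₁ := by simpa [Real.norm_eq_abs] using hM₁ (r / s)
  have hd2M : |d2| ≤ M₂ := by simpa [Real.norm_eq_abs] using hM₂ (r / s)
  have hdlin : |d| ≤ M₂ * (r / s) := by
    have := hlin (r / s)
    rwa [abs_of_pos (div_pos hr0 hs0)] at this
  -- reduce to bounding the numerator
  set N := 2 * (1 - r ^ 2) ^ (-(3 : ℝ) / 2)
      + t / s ^ 2 * d2
      + t / s * (1 / r) * d
      + 3 * (t / s) * (r / (1 - r ^ 2)) * d
      + 3 * (t ^ 2 / s ^ 2) * (1 - r ^ 2) ^ (-(1 : ℝ) / 2) * d ^ 2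
      + t ^ 3 / s ^ 3 * (1 / r) * d ^ 3 with hN
  have key : |N / g ^ 3| ≤ |N| := by
    rw [abs_div, abs_of_pos (lt_of_lt_of_le one_pos hg3)]
    exact div_le_self (abs_nonneg _) hg3
  refine key.trans ?_
  -- simplify the powers of t/s
  have hts2 : t / s ^ 2 = α := by field_simp [ht]; linarith [ht]
  have hts : t / s = α * s := by rw [ht]; field_simp
  have ht2s2 : t ^ 2 / s ^ 2 = α ^ 2 * s ^ 2 := by rw [ht]; field_simp
  have ht3s3 : t ^ 3 / s ^ 3 = α ^ 3 * s ^ 3 := by rw [ht]; field_simp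
  -- bound each of the six terms
  have hT1 : |2 * (1 - r ^ 2) ^ (-(3 : ℝ) / 2)| ≤ 4 := by
    rw [abs_of_pos (by positivity)]; linarith
  have hT2 : |t / s ^ 2 * d2| ≤ α * M₂ := by
    rw [hts2, abs_mul, abs_of_pos hα]
    exact mul_le_mul_of_nonneg_left hd2M hα.le
  have hT3 : |t / s * (1 / r) * d| ≤ α * M₂ := by
    rw [hts, abs_mul, abs_mul]
    have h1 : |α * s| = α * s := abs_of_pos (by positivity)
    have h2 : |1 / r| = 1 / r := abs_of_pos (by positivity)
    rw [h1, h2]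
    calc α * s * (1 / r) * |d| ≤ α * s * (1 / r) * (M₂ * (r / s)) := by
          apply mul_le_mul_of_nonneg_left hdlin (by positivity)
      _ = α * M₂ := by field_simp
  have hT4 : |3 * (t / s) * (r / (1 - r ^ 2)) * d| ≤ 3 * α * M₁ := by
    rw [hts, abs_mul, abs_mul]
    have h1 : |3 * (α * s)| = 3 * (α * s) := abs_of_pos (by positivity)
    have h2 : |r / (1 - r ^ 2)| = r / (1 - r ^ 2) := abs_of_pos (by positivity)
    rw [h1, h2]
    have h3 : r / (1 - r ^ 2) ≤ 1 := by
      rw [div_le_one hA0]; nlinarith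
    have h4 : 3 * (α * s) * (r / (1 - r ^ 2)) ≤ 3 * α := by
      calc 3 * (α * s) * (r / (1 - r ^ 2)) ≤ 3 * (α * s) * 1 :=
            mul_le_mul_of_nonneg_left h3 (by positivity)
        _ = 3 * α * s := by ring
        _ ≤ 3 * α * 1 := by nlinarith
        _ = 3 * α := by ring
    calc 3 * (α * s) * (r / (1 - r ^ 2)) * |d| ≤ 3 * α * |d| :=
          mul_le_mul_of_nonneg_right h4 (abs_nonneg _)
      _ ≤ 3 * α * M₁ := mul_le_mul_of_nonneg_left hdM (by positivity)
  have hT5 : |3 * (t ^ 2 / s ^ 2) * (1 - r ^ 2) ^ (-(1 : ℝ) / 2) * d ^ 2|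
      ≤ 6 * α ^ 2 * M₁ ^ 2 := by
    rw [ht2s2, abs_mul, abs_mul]
    have h1 : |3 * (α ^ 2 * s ^ 2)| = 3 * (α ^ 2 * s ^ 2) := abs_of_pos (by positivity)
    have h2 : |(1 - r ^ 2) ^ (-(1 : ℝ) / 2)| = (1 - r ^ 2) ^ (-(1 : ℝ) / 2) :=
      abs_of_pos hP20
    have h3 : |d ^ 2| ≤ M₁ ^ 2 := by
      rw [abs_pow]
      exact pow_le_pow_left₀ (abs_nonneg _) hdM 2
    rw [h1, h2]
    have hs21 : s ^ 2 ≤ 1 := by nlinarith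
    have hstep : 3 * (α ^ 2 * s ^ 2) * (1 - r ^ 2) ^ (-(1 : ℝ) / 2) ≤ 3 * α ^ 2 * 2 := by
      have ha : 3 * (α ^ 2 * s ^ 2) ≤ 3 * α ^ 2 := by nlinarith [sq_nonneg α]
      exact mul_le_mul ha hP2 hP20.le (by positivity)
    calc 3 * (α ^ 2 * s ^ 2) * (1 - r ^ 2) ^ (-(1 : ℝ) / 2) * |d ^ 2|
        ≤ 3 * α ^ 2 * 2 * M₁ ^ 2 :=
          mul_le_mul hstep h3 (abs_nonneg _) (by positivity)
      _ = 6 * α ^ 2 * M₁ ^ 2 := by ring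
  have hT6 : |t ^ 3 / s ^ 3 * (1 / r) * d ^ 3| ≤ α ^ 3 * M₁ ^ 2 * M₂ := by
    rw [ht3s3, abs_mul, abs_mul]
    have h1 : |α ^ 3 * s ^ 3| = α ^ 3 * s ^ 3 := abs_of_pos (by positivity)
    have h2 : |1 / r| = 1 / r := abs_of_pos (by positivity)
    have h3 : |d ^ 3| ≤ M₁ ^ 2 * (M₂ * (r / s)) := by
      have : |d ^ 3| = |d| ^ 2 * |d| := by rw [abs_pow]; ring
      rw [this]
      exact mul_le_mul (pow_le_pow_left₀ (abs_nonneg _) hdM 2) hdlin (abs_nonneg _)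
        (by positivity)
    rw [h1, h2]
    calc α ^ 3 * s ^ 3 * (1 / r) * |d ^ 3|
        ≤ α ^ 3 * s ^ 3 * (1 / r) * (M₁ ^ 2 * (M₂ * (r / s))) :=
          mul_le_mul_of_nonneg_left h3 (by positivity)
      _ = α ^ 3 * M₁ ^ 2 * M₂ * s ^ 2 := by field_simp
      _ ≤ α ^ 3 * M₁ ^ 2 * M₂ * 1 := by
          have hss : s ^ 2 ≤ 1 := by nlinarith
          have hcn : 0 ≤ α ^ 3 * M₁ ^ 2 * M₂ :=
            mul_nonneg (mul_nonneg (by positivity) (sq_nonneg M₁)) hM₂0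
          exact mul_le_mul_of_nonneg_left hss hcn
      _ = α ^ 3 * M₁ ^ 2 * M₂ := by ring
  calc |N| ≤ |2 * (1 - r ^ 2) ^ (-(3 : ℝ) / 2)| + |t / s ^ 2 * d2|
        + |t / s * (1 / r) * d| + |3 * (t / s) * (r / (1 - r ^ 2)) * d|
        + |3 * (t ^ 2 / s ^ 2) * (1 - r ^ 2) ^ (-(1 : ℝ) / 2) * d ^ 2|
        + |t ^ 3 / s ^ 3 * (1 / r) * d ^ 3| := by
        rw [hN]
        exact (abs_add_le _ _).trans (add_le_add ((abs_add_le _ _).trans (add_le_add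
          ((abs_add_le _ _).trans (add_le_add ((abs_add_le _ _).trans (add_le_add
          (abs_add_le _ _) le_rfl)) le_rfl)) le_rfl)) le_rfl)
    _ ≤ 4 + 2 * α * M₂ + 3 * α * M₁ + 6 * α ^ 2 * M₁ ^ 2 + α ^ 3 * M₁ ^ 2 * M₂ := by
        linarith
end

section
/- Let η ∈ C_c^∞(−1, 1) be symmetric (η(−x) = η(x)), with η > 0 on the interior of its support, η monotonically decreasing on (0,1), and η not identically zero. Then there exist α > 0 and constants 0 < c ≤ C and s₀ ∈ (0, 1/2] such that for all s ∈ (0, s₀), setting t := α s² and ψ(r) := √(1 − r²) − t η(r/s), the area difference Δ(s) := ∫₀^s 2π r ( √(1 + ψ'(r)²) − (1 − r²)^{-1/2} ) dr satisfies c s⁴ ≤ Δ(s) ≤ C s⁴; in particular Δ(s) > 0 and Δ(s) → 0 as s → 0. -/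
open Real

section AuxLemmas

open Set Filter Topology MeasureTheory intervalIntegral

private lemma sqrt_diff_upper (a b : ℝ) (ha : 0 ≤ a) (hb : b ≤ 0) :
    Real.sqrt (1 + (a + b) ^ 2) - Real.sqrt (1 + a ^ 2) ≤ b ^ 2 / 2 := by
  set F := Real.sqrt (1 + (a + b) ^ 2) with hFdef
  set G := Real.sqrt (1 + a ^ 2) with hGdef
  have hF2 : F ^ 2 = 1 + (a + b) ^ 2 := Real.sq_sqrt (by positivity)
  have hG2 : G ^ 2 = 1 + a ^ 2 := Real.sq_sqrt (by positivity)
  have hF1 : 1 ≤ F := by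
    rw [hFdef, Real.one_le_sqrt]; nlinarith [sq_nonneg (a+b)]
  have hG1 : 1 ≤ G := by
    rw [hGdef, Real.one_le_sqrt]; nlinarith [sq_nonneg a]
  have hkey : (F - G) * (F + G) = 2 * a * b + b ^ 2 := by nlinarith [hF2, hG2]
  have hab : a * b ≤ 0 := mul_nonpos_of_nonneg_of_nonpos ha hb
  nlinarith [sq_nonneg b, mul_nonneg (sq_nonneg b) (by linarith : (0:ℝ) ≤ F + G - 2),
    mul_nonpos_of_nonpos_of_nonneg hab (by linarith : (0:ℝ) ≤ F + G - 2)]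

private lemma sqrt_diff_lower (a b : ℝ) (ha : 0 ≤ a) (hb : b ≤ 0)
    (hD : Real.sqrt (1 + (a + b) ^ 2) + Real.sqrt (1 + a ^ 2) ≤ 3) :
    a * b + b ^ 2 / 3 ≤ Real.sqrt (1 + (a + b) ^ 2) - Real.sqrt (1 + a ^ 2) := by
  set F := Real.sqrt (1 + (a + b) ^ 2) with hFdef
  set G := Real.sqrt (1 + a ^ 2) with hGdef
  have hF2 : F ^ 2 = 1 + (a + b) ^ 2 := Real.sq_sqrt (by positivity)
  have hG2 : G ^ 2 = 1 + a ^ 2 := Real.sq_sqrt (by positivity)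
  have hF1 : 1 ≤ F := by
    rw [hFdef, Real.one_le_sqrt]; nlinarith [sq_nonneg (a+b)]
  have hG1 : 1 ≤ G := by
    rw [hGdef, Real.one_le_sqrt]; nlinarith [sq_nonneg a]
  have hkey : (F - G) * (F + G) = 2 * a * b + b ^ 2 := by nlinarith [hF2, hG2]
  have hab : a * b ≤ 0 := mul_nonpos_of_nonneg_of_nonpos ha hb
  nlinarith [mul_nonneg (sq_nonneg b) (by linarith : (0:ℝ) ≤ 3 - (F + G)),
    mul_nonpos_of_nonpos_of_nonneg hab (by linarith : (0:ℝ) ≤ F + G - 2)]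

private lemma sqrt_le_one_add_half_sq (x : ℝ) :
    Real.sqrt (1 + x ^ 2) ≤ 1 + x ^ 2 / 2 := by
  have h : (1 : ℝ) + x ^ 2 ≤ (1 + x ^ 2 / 2) ^ 2 := by nlinarith [sq_nonneg (x^2)]
  calc Real.sqrt (1 + x ^ 2) ≤ Real.sqrt ((1 + x ^ 2 / 2) ^ 2) := Real.sqrt_le_sqrt h
    _ = 1 + x ^ 2 / 2 := Real.sqrt_sq (by positivity)

private lemma deriv_psi (η : ℝ → ℝ) (hη : ContDiff ℝ (⊤ : ℕ∞) η) (t s r : ℝ) (hs : s ≠ 0)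
    (hr : r ^ 2 < 1) :
    deriv (fun x : ℝ => Real.sqrt (1 - x ^ 2) - t * η (x / s)) r
      = -(r / Real.sqrt (1 - r ^ 2) + t / s * deriv η (r / s)) := by
  have h1r : (0:ℝ) < 1 - r ^ 2 := by linarith
  have hsq : Real.sqrt (1 - r ^ 2) ≠ 0 := by positivity
  have h1 : HasDerivAt (fun x : ℝ => Real.sqrt (1 - x ^ 2))
      (-(r / Real.sqrt (1 - r ^ 2))) r := by
    have hinner : HasDerivAt (fun x : ℝ => 1 - x ^ 2) (-(2 * r)) r := by
      simpa using (hasDerivAt_pow 2 r).const_sub 1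
    have h := (Real.hasDerivAt_sqrt h1r.ne').comp r hinner
    exact h.congr_deriv (by ring)
  have h2 : HasDerivAt (fun x : ℝ => η (x / s)) (deriv η (r / s) * (1 / s)) r := by
    have hd : HasDerivAt η (deriv η (r / s)) (r / s) :=
      ((hη.differentiable (by simp)) (r / s)).hasDerivAt
    exact hd.comp r ((hasDerivAt_id r).div_const s)
  have h3 : HasDerivAt (fun x : ℝ => Real.sqrt (1 - x ^ 2) - t * η (x / s))
      (-(r / Real.sqrt (1 - r ^ 2)) - t * (deriv η (r / s) * (1 / s))) r :=
    h1.sub (h2.const_mul t)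
  rw [h3.deriv]
  field_simp
  ring

private lemma rpow_neg_half_eq (r : ℝ) (hr : r ^ 2 < 1) :
    (1 - r ^ 2) ^ (-(1:ℝ) / 2) = Real.sqrt (1 + (r / Real.sqrt (1 - r ^ 2)) ^ 2) := by
  have h1r : (0:ℝ) < 1 - r ^ 2 := by linarith
  have hw : Real.sqrt (1 - r ^ 2) > 0 := Real.sqrt_pos.mpr h1r
  have hw2 : Real.sqrt (1 - r ^ 2) ^ 2 = 1 - r ^ 2 := Real.sq_sqrt h1r.le
  have key : 1 + (r / Real.sqrt (1 - r ^ 2)) ^ 2 = ((Real.sqrt (1 - r ^ 2))⁻¹) ^ 2 := by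
    field_simp
    rw [hw2]; ring
  rw [key, Real.sqrt_sq (by positivity)]
  rw [show -(1:ℝ)/2 = -(1/2) by ring, Real.rpow_neg h1r.le]
  rw [← Real.sqrt_eq_rpow]

private lemma deriv_nonpos_of_antitoneOn (η : ℝ → ℝ) (hη : ContDiff ℝ (⊤ : ℕ∞) η)
    (hηsupp' : tsupport η ⊆ Set.Ioo (-1 : ℝ) 1)
    (hsym : ∀ x, η (-x) = η x)
    (hdecr : AntitoneOn η (Set.Ioo (0 : ℝ) 1)) :
    ∀ u ∈ Set.Icc (0:ℝ) 1, deriv η u ≤ 0 := by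
  intro u hu
  rcases eq_or_lt_of_le hu.1 with h0 | h0
  · have h0' : u = 0 := h0.symm
    subst h0'
    have hfun : (fun x : ℝ => η (-x)) = η := funext hsym
    have hd : HasDerivAt (fun x : ℝ => η (-x)) (-(deriv η 0)) 0 := by
      have h : HasDerivAt η (deriv η 0) (-(0:ℝ)) := by
        simpa using ((hη.differentiable (by simp)) 0).hasDerivAt
      exact (by simpa using h.comp (0:ℝ) (hasDerivAt_neg (0:ℝ)) :
        HasDerivAt (η ∘ Neg.neg) (-(deriv η 0)) 0)
    rw [hfun] at hd
    have := hd.deriv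
    linarith
  rcases eq_or_lt_of_le hu.2 with h1 | h1
  · subst h1
    have h1n : (1:ℝ) ∉ tsupport η := fun h => (hηsupp' h).2.false
    have hev : η =ᶠ[𝓝 (1:ℝ)] (fun _ => 0) := by
      have hop : IsOpen (tsupport η)ᶜ := (isClosed_tsupport η).isOpen_compl
      filter_upwards [hop.mem_nhds h1n] with x hx
      exact image_eq_zero_of_notMem_tsupport hx
    rw [hev.deriv_eq]
    simp
  · have hd : HasDerivAt η (deriv η u) u := ((hη.differentiable (by simp)) u).hasDerivAt
    rw [hasDerivAt_iff_tendsto_slope] at hd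
    have hd' : Tendsto (slope η u) (𝓝[>] u) (𝓝 (deriv η u)) :=
      hd.mono_left (nhdsWithin_mono u fun x hx => ne_of_gt hx)
    refine le_of_tendsto hd' ?_
    filter_upwards [Ioo_mem_nhdsGT_of_mem ⟨le_refl u, h1⟩] with y hy
    have hyu : u < y := hy.1
    have hle : η y ≤ η u := hdecr ⟨h0, h1⟩ ⟨lt_trans h0 hyu, hy.2⟩ hyu.le
    rw [slope_def_field]
    exact div_nonpos_of_nonpos_of_nonneg (by linarith) (by linarith)

private lemma exists_deriv_neg (η : ℝ → ℝ) (hη : ContDiff ℝ (⊤ : ℕ∞) η)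
    (hηsupp' : tsupport η ⊆ Set.Ioo (-1 : ℝ) 1)
    (hsym : ∀ x, η (-x) = η x)
    (hpos : ∀ x ∈ interior (tsupport η), 0 < η x)
    (hne : η ≠ 0) :
    ∃ u₀ ∈ Set.Ioo (0:ℝ) 1, deriv η u₀ < 0 := by
  have hop : IsOpen {y : ℝ | η y ≠ 0} :=
    isOpen_compl_singleton.preimage hη.continuous
  obtain ⟨x, hx⟩ : ∃ x, η x ≠ 0 := by
    by_contra h
    push_neg at h
    exact hne (funext h)
  have hxabs : η |x| ≠ 0 := by
    rcases abs_choice x with h | h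
    · rwa [h]
    · rw [h]; rwa [hsym]
  have hxlt : |x| < 1 := by
    have hmem : |x| ∈ tsupport η := subset_tsupport η hxabs
    exact (hηsupp' hmem).2
  obtain ⟨u₁, hu₁, hηu₁⟩ : ∃ u₁ ∈ Set.Ioo (0:ℝ) 1, η u₁ ≠ 0 := by
    rcases eq_or_lt_of_le (abs_nonneg x) with h0 | h0
    · have h00 : η 0 ≠ 0 := by simpa [← h0] using hxabs
      obtain ⟨ε, hε, hball⟩ := Metric.isOpen_iff.1 hop 0 h00
      refine ⟨min (ε/2) (1/2), ⟨by positivity, ?_⟩, ?_⟩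
      · exact lt_of_le_of_lt (min_le_right _ _) (by norm_num)
      · apply hball
        rw [Metric.mem_ball, Real.dist_eq, sub_zero,
          abs_of_pos (by positivity : (0:ℝ) < min (ε/2) (1/2))]
        exact lt_of_le_of_lt (min_le_left _ _) (by linarith)
    · exact ⟨|x|, ⟨h0, hxlt⟩, hxabs⟩
  have hsupp_sub : {y : ℝ | η y ≠ 0} ⊆ interior (tsupport η) := by
    rw [← hop.interior_eq]
    exact interior_mono (subset_tsupport η)
  have hηu₁pos : 0 < η u₁ := hpos u₁ (hsupp_sub hηu₁)
  have hη1 : η 1 = 0 := by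
    apply image_eq_zero_of_notMem_tsupport
    intro h
    exact (hηsupp' h).2.false
  obtain ⟨c, hc, hc'⟩ := exists_deriv_eq_slope η hu₁.2
    (hη.continuous.continuousOn)
    (fun y _ => ((hη.differentiable (by simp)) y).differentiableWithinAt)
  refine ⟨c, ⟨lt_trans hu₁.1 hc.1, hc.2⟩, ?_⟩
  rw [hc', hη1]
  apply div_neg_of_neg_of_pos <;> linarith [hu₁.2]

private lemma integral_scale (f : ℝ → ℝ) (s : ℝ) (hs : 0 < s) :
    ∫ r in (0:ℝ)..s, f (r/s) = s * ∫ u in (0:ℝ)..1, f u := by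
  have h := intervalIntegral.integral_comp_div (a := 0) (b := s) (f := f) hs.ne'
  rw [h, zero_div, div_self hs.ne', smul_eq_mul]

private lemma integral_pos_aux (g : ℝ → ℝ) (hg : Continuous g)
    (hnonneg : ∀ u ∈ Set.Ioc (0:ℝ) 1, 0 ≤ g u)
    (u₀ : ℝ) (hu₀ : u₀ ∈ Set.Ioo (0:ℝ) 1) (hgu₀ : g u₀ ≠ 0) :
    0 < ∫ u in (0:ℝ)..1, g u := by
  rw [intervalIntegral.integral_pos_iff_support_of_nonneg_ae'
    (by
      rw [Set.uIoc_of_le (by norm_num : (0:ℝ) ≤ 1)]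
      refine (ae_restrict_iff' measurableSet_Ioc).2 (Filter.Eventually.of_forall fun u hu => ?_)
      exact hnonneg u hu)
    (hg.intervalIntegrable 0 1)]
  refine ⟨by norm_num, ?_⟩
  have hop : IsOpen ({y : ℝ | g y ≠ 0} ∩ Set.Ioo 0 1) :=
    (isOpen_compl_singleton.preimage hg).inter isOpen_Ioo
  obtain ⟨ε, hε, hball⟩ := Metric.isOpen_iff.1 hop u₀ ⟨hgu₀, hu₀⟩
  rw [Real.ball_eq_Ioo] at hball
  have hsub : Set.Ioo (u₀ - ε) (u₀ + ε) ⊆ Function.support g ∩ Set.Ioc 0 1 := by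
    intro y hy
    obtain ⟨h1, h2⟩ := hball hy
    exact ⟨h1, h2.1, h2.2.le⟩
  calc (0:ENNReal) < ENNReal.ofReal (u₀ + ε - (u₀ - ε)) := by
        rw [show u₀ + ε - (u₀ - ε) = 2*ε by ring]
        simp [ENNReal.ofReal_pos]; linarith
    _ = volume (Set.Ioo (u₀ - ε) (u₀ + ε)) := (Real.volume_Ioo).symm
    _ ≤ _ := measure_mono hsub

end AuxLemmas

set_option maxHeartbeats 2000000 in
/-- For a symmetric bump `η ∈ C_c^∞(−1,1)`, positive on the interior of its support,
decreasing on `(0,1)` and not identically zero, there exist `α > 0`, constants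
`0 < c ≤ C` and `s₀ ∈ (0, 1/2]` such that for all `s ∈ (0, s₀)`, with `t = αs²` and
`ψ(r) = √(1 − r²) − t η(r/s)`, the area difference
`Δ(s) = ∫₀^s 2πr(√(1 + ψ'(r)²) − (1 − r²)^{−1/2}) dr` satisfies `c s⁴ ≤ Δ(s) ≤ C s⁴`. -/
theorem area_difference_of_bump (η : ℝ → ℝ) (hη : ContDiff ℝ (⊤ : ℕ∞) η)
    (hηsupp : HasCompactSupport η) (hηsupp' : tsupport η ⊆ Set.Ioo (-1 : ℝ) 1)
    (hsym : ∀ x, η (-x) = η x)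
    (hpos : ∀ x ∈ interior (tsupport η), 0 < η x)
    (hdecr : AntitoneOn η (Set.Ioo (0 : ℝ) 1))
    (hne : η ≠ 0) :
    ∃ α : ℝ, 0 < α ∧ ∃ c C : ℝ, 0 < c ∧ c ≤ C ∧ ∃ s₀ ∈ Set.Ioc (0 : ℝ) (1 / 2),
      ∀ s ∈ Set.Ioo (0 : ℝ) s₀,
        (fun Δ => c * s ^ 4 ≤ Δ ∧ Δ ≤ C * s ^ 4)
          (∫ r in (0 : ℝ)..s,
            2 * π * r *
              (Real.sqrt (1 +
                  deriv (fun x : ℝ => Real.sqrt (1 - x ^ 2) - (α * s ^ 2) * η (x / s)) r ^ 2)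
                - (1 - r ^ 2) ^ (-(1 : ℝ) / 2))) := by
  have hη'c : Continuous (deriv η) := hη.continuous_deriv (by simp)
  have hη'le : ∀ u ∈ Set.Icc (0:ℝ) 1, deriv η u ≤ 0 :=
    deriv_nonpos_of_antitoneOn η hη hηsupp' hsym hdecr
  obtain ⟨u₀, hu₀, hu₀'⟩ := exists_deriv_neg η hη hηsupp' hsym hpos hne
  obtain ⟨M, hM⟩ := (hηsupp.deriv).exists_bound_of_continuous hη'c
  have hM0 : 0 ≤ M := le_trans (norm_nonneg _) (hM 0)
  have hMabs : ∀ x : ℝ, |deriv η x| ≤ M := fun x => hM x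
  -- the two basic integrals
  set w₁ : ℝ → ℝ := fun u => u^2 * deriv η u with hw₁def
  set w₂ : ℝ → ℝ := fun u => u * (deriv η u)^2 with hw₂def
  have hw₁c : Continuous w₁ := (continuous_pow 2).mul hη'c
  have hw₂c : Continuous w₂ := continuous_id.mul (hη'c.pow 2)
  set I₁ : ℝ := ∫ u in (0:ℝ)..1, w₁ u with hI₁def
  set I₂ : ℝ := ∫ u in (0:ℝ)..1, w₂ u with hI₂def
  have hI₁neg : I₁ < 0 := by
    have h : 0 < ∫ u in (0:ℝ)..1, -(w₁ u) := by
      refine integral_pos_aux _ hw₁c.neg (fun u hu => ?_) u₀ hu₀ ?_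
      · simp only [hw₁def, neg_nonneg]
        exact mul_nonpos_of_nonneg_of_nonpos (by positivity)
          (hη'le u ⟨hu.1.le, hu.2⟩)
      · simp only [hw₁def, neg_ne_zero]
        exact mul_ne_zero (pow_ne_zero 2 hu₀.1.ne') hu₀'.ne
    rw [intervalIntegral.integral_neg] at h
    linarith
  have hI₂pos : 0 < I₂ := by
    refine integral_pos_aux _ hw₂c (fun u hu => ?_) u₀ hu₀ ?_
    · exact mul_nonneg hu.1.le (sq_nonneg _)
    · exact mul_ne_zero hu₀.1.ne' (pow_ne_zero 2 hu₀'.ne)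
  -- choose α
  set α : ℝ := 9 * (-I₁) / I₂ with hαdef
  have hα : 0 < α := by
    apply div_pos _ hI₂pos
    linarith
  have hαI₂ : α * I₂ = 9 * (-I₁) := by
    rw [hαdef]
    field_simp
  clear_value I₁ I₂ α
  have hπα : (0:ℝ) < π * α := mul_pos pi_pos hα
  refine ⟨α, hα, 2*π*α*(-I₁), π*α^2*I₂,
    mul_pos (mul_pos (mul_pos two_pos pi_pos) hα) (by linarith), ?_, ?_⟩
  · -- c ≤ C
    have h9 : π*α^2*I₂ = 9*π*α*(-I₁) := by linear_combination (π*α) * hαI₂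
    nlinarith [mul_pos hπα (show (0:ℝ) < -I₁ by linarith)]
  set K : ℝ := 4 + α^2 * M^2 with hKdef
  have hK4 : (4:ℝ) ≤ K := by nlinarith [sq_nonneg (α*M)]
  have hKs : ∀ s : ℝ, (6 + α^2*M^2) * s^2 = K * s^2 + 2*s^2 := by
    intro s; rw [hKdef]; ring
  clear_value K
  clear hKdef
  have hKpos : 0 < K := by linarith
  have hsqK : 0 < Real.sqrt K := Real.sqrt_pos.mpr hKpos
  have hsqK2 : Real.sqrt K ^ 2 = K := Real.sq_sqrt hKpos.le
  refine ⟨min (1/2) (1/(2*Real.sqrt K)),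
    ⟨lt_min (by norm_num) (div_pos one_pos (by linarith)), min_le_left _ _⟩, ?_⟩
  intro s hs
  obtain ⟨hs0, hss⟩ := hs
  have hshalf : s ≤ 1/2 := le_of_lt (lt_of_lt_of_le hss (min_le_left _ _))
  have hsK : K * s^2 ≤ 1/2 := by
    have h1 : s < 1/(2*Real.sqrt K) := lt_of_lt_of_le hss (min_le_right _ _)
    have h2 : s * (2*Real.sqrt K) < 1 := by
      rw [lt_div_iff₀ (by linarith)] at h1
      linarith
    have h4 : (s * (2*Real.sqrt K))^2 < 1 :=
      pow_lt_one₀ (mul_nonneg hs0.le (by linarith)) h2 two_ne_zero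
    nlinarith [hsqK2]
  -- abbreviations
  have hsne : s ≠ 0 := hs0.ne'
  -- the explicit integrand
  set E : ℝ → ℝ := fun r => 2*π*r*
      (Real.sqrt (1 + (r/Real.sqrt (1-r^2) + α*s*deriv η (r/s))^2)
        - Real.sqrt (1 + (r/Real.sqrt (1-r^2))^2)) with hEdef
  clear_value E
  set lowf : ℝ → ℝ := fun r =>
      2*π*r*(2*r*(α*s*deriv η (r/s)) + (α*s*deriv η (r/s))^2/3) with hlowdef
  clear_value lowf
  set upf : ℝ → ℝ := fun r => 2*π*r*((α*s*deriv η (r/s))^2/2) with hupdef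
  clear_value upf
  -- basic pointwise facts on [0, s]
  have hr2lt : ∀ r ∈ Set.Icc (0:ℝ) s, r^2 < 1 := by
    intro r hr
    nlinarith [hr.1, hr.2]
  have hdiv_mem : ∀ r ∈ Set.Icc (0:ℝ) s, r/s ∈ Set.Icc (0:ℝ) 1 := by
    intro r hr
    exact ⟨div_nonneg hr.1 hs0.le, (div_le_one hs0).mpr hr.2⟩
  have hbn : ∀ r ∈ Set.Icc (0:ℝ) s, α*s*deriv η (r/s) ≤ 0 := by
    intro r hr
    exact mul_nonpos_of_nonneg_of_nonpos (mul_nonneg hα.le hs0.le) (hη'le _ (hdiv_mem r hr))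
  have han : ∀ r ∈ Set.Icc (0:ℝ) s, 0 ≤ r/Real.sqrt (1-r^2) := by
    intro r hr
    exact div_nonneg hr.1 (Real.sqrt_nonneg _)
  have ha2r : ∀ r ∈ Set.Icc (0:ℝ) s, r/Real.sqrt (1-r^2) ≤ 2*r := by
    intro r hr
    have h34 : (3:ℝ)/4 ≤ 1 - r^2 := by nlinarith [hr.1, hr.2]
    have hhalf : (1:ℝ)/2 ≤ Real.sqrt (1-r^2) := by
      rw [show (1:ℝ)/2 = Real.sqrt (1/4) by
        rw [show (1:ℝ)/4 = (1/2)^2 by norm_num, Real.sqrt_sq (by norm_num)]]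
      exact Real.sqrt_le_sqrt (by linarith)
    rw [div_le_iff₀ (by linarith)]
    nlinarith [hr.1]
  have hbsq : ∀ r ∈ Set.Icc (0:ℝ) s, (α*s*deriv η (r/s))^2 ≤ α^2*M^2*s^2 := by
    intro r hr
    have h1 : (deriv η (r/s))^2 ≤ M^2 := by
      nlinarith [sq_abs (deriv η (r/s)), hMabs (r/s), abs_nonneg (deriv η (r/s))]
    calc (α*s*deriv η (r/s))^2 = α^2*s^2*(deriv η (r/s))^2 := by ring
      _ ≤ α^2*s^2*M^2 := by
          apply mul_le_mul_of_nonneg_left h1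
          positivity
      _ = α^2*M^2*s^2 := by ring
  have hD3 : ∀ r ∈ Set.Icc (0:ℝ) s,
      Real.sqrt (1 + (r/Real.sqrt (1-r^2) + α*s*deriv η (r/s))^2)
        + Real.sqrt (1 + (r/Real.sqrt (1-r^2))^2) ≤ 3 := by
    intro r hr
    set A := r/Real.sqrt (1-r^2) with hA
    set B := α*s*deriv η (r/s) with hB
    have hA4 : A^2 ≤ 4*s^2 := by
      have h1 := ha2r r hr
      have h2 := han r hr
      nlinarith [hr.1, hr.2]
    have hB2 : B^2 ≤ α^2*M^2*s^2 := hbsq r hr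
    have h1 := sqrt_le_one_add_half_sq (A + B)
    have h2 := sqrt_le_one_add_half_sq A
    have hs2 : s^2 ≤ 1/4 := by nlinarith [hs0]
    -- (A+B)^2/2 + A^2/2 ≤ (3A^2 + 2B^2)/2 ≤ 6s^2 + α^2M^2s^2 = Ks^2 + 2s^2 ≤ 1
    nlinarith [sq_nonneg (A - B), sq_nonneg (A + B), hsK, hKs s, hA4, hB2, hs2, h1, h2]
  -- rewrite the integral to the explicit form
  have hcongr :
      (∫ r in (0:ℝ)..s, 2 * π * r *
        (Real.sqrt (1 +
            deriv (fun x : ℝ => Real.sqrt (1 - x ^ 2) - (α * s ^ 2) * η (x / s)) r ^ 2)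
          - (1 - r ^ 2) ^ (-(1 : ℝ) / 2))) = ∫ r in (0:ℝ)..s, E r := by
    apply intervalIntegral.integral_congr
    intro r hr
    rw [Set.uIcc_of_le hs0.le] at hr
    have hr2 : r^2 < 1 := hr2lt r hr
    beta_reduce
    rw [deriv_psi η hη (α*s^2) s r hsne hr2, rpow_neg_half_eq r hr2]
    rw [hEdef]
    have hts : α * s ^ 2 / s = α * s := by
      field_simp
    rw [hts, neg_sq]
  -- continuity / integrability
  have hsqrtpos : ∀ r ∈ Set.Icc (0:ℝ) s, (0:ℝ) < Real.sqrt (1-r^2) := by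
    intro r hr
    exact Real.sqrt_pos.mpr (by nlinarith [hr2lt r hr])
  have hconta : ContinuousOn (fun r : ℝ => r / Real.sqrt (1-r^2)) (Set.Icc 0 s) := by
    apply ContinuousOn.div continuousOn_id
    · exact ((continuous_const.sub (continuous_pow 2)).sqrt).continuousOn
    · intro r hr
      exact (hsqrtpos r hr).ne'
  have hcontb : Continuous (fun r : ℝ => α*s*deriv η (r/s)) :=
    continuous_const.mul (hη'c.comp (continuous_id.div_const s))
  have hcontE : ContinuousOn E (Set.Icc 0 s) := by
    rw [hEdef]
    apply ContinuousOn.mul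
    · exact ((continuous_const.mul continuous_id).continuousOn)
    · apply ContinuousOn.sub
      · exact ((continuousOn_const.add ((hconta.add hcontb.continuousOn).pow 2)).sqrt)
      · exact ((continuousOn_const.add (hconta.pow 2)).sqrt)
  have hEint : IntervalIntegrable E MeasureTheory.volume 0 s := by
    apply ContinuousOn.intervalIntegrable
    rwa [Set.uIcc_of_le hs0.le]
  have hlowc : Continuous lowf := by
    rw [hlowdef]
    apply Continuous.mul
    · exact continuous_const.mul continuous_id
    · exact ((continuous_const.mul continuous_id).mul hcontb).add ((hcontb.pow 2).div_const 3)
  have hupc : Continuous upf := by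
    rw [hupdef]
    apply Continuous.mul
    · exact continuous_const.mul continuous_id
    · exact (hcontb.pow 2).div_const 2
  have hlowint : IntervalIntegrable lowf MeasureTheory.volume 0 s :=
    hlowc.intervalIntegrable 0 s
  have hupint : IntervalIntegrable upf MeasureTheory.volume 0 s :=
    hupc.intervalIntegrable 0 s
  -- pointwise comparison
  have hlowle : ∀ r ∈ Set.Icc (0:ℝ) s, lowf r ≤ E r := by
    intro r hr
    rw [hlowdef, hEdef]
    have key := sqrt_diff_lower (r/Real.sqrt (1-r^2)) (α*s*deriv η (r/s))
      (han r hr) (hbn r hr) (hD3 r hr)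
    have hab : 2*r*(α*s*deriv η (r/s)) ≤ (r/Real.sqrt (1-r^2))*(α*s*deriv η (r/s)) := by
      apply mul_le_mul_of_nonpos_right _ (hbn r hr)
      exact ha2r r hr
    have h2πr : (0:ℝ) ≤ 2*π*r := mul_nonneg (by positivity) hr.1
    calc 2*π*r*(2*r*(α*s*deriv η (r/s)) + (α*s*deriv η (r/s))^2/3)
        ≤ 2*π*r*((r/Real.sqrt (1-r^2))*(α*s*deriv η (r/s)) + (α*s*deriv η (r/s))^2/3) := by
          apply mul_le_mul_of_nonneg_left _ h2πr
          linarith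
      _ ≤ 2*π*r*(Real.sqrt (1 + (r/Real.sqrt (1-r^2) + α*s*deriv η (r/s))^2)
            - Real.sqrt (1 + (r/Real.sqrt (1-r^2))^2)) := by
          apply mul_le_mul_of_nonneg_left _ h2πr
          exact key
  have huple : ∀ r ∈ Set.Icc (0:ℝ) s, E r ≤ upf r := by
    intro r hr
    rw [hupdef, hEdef]
    have key := sqrt_diff_upper (r/Real.sqrt (1-r^2)) (α*s*deriv η (r/s))
      (han r hr) (hbn r hr)
    have h2πr : (0:ℝ) ≤ 2*π*r := mul_nonneg (by positivity) hr.1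
    exact mul_le_mul_of_nonneg_left key h2πr
  -- computing the comparison integrals
  have hlowval : (∫ r in (0:ℝ)..s, lowf r)
      = 4*π*α*s^4*I₁ + (2*π*α^2*s^4/3)*I₂ := by
    have hfun : lowf = fun r => ((fun u => (4*π*α*s^3) * w₁ u + (2*π*α^2*s^3/3) * w₂ u) (r/s)) := by
      funext r
      rw [hlowdef, hw₁def, hw₂def]
      have : r / s * s = r := div_mul_cancel₀ r hsne
      field_simp
      ring
    rw [hfun, integral_scale _ s hs0]
    rw [intervalIntegral.integral_add (f := fun u => (4*π*α*s^3) * w₁ u)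
      (g := fun u => (2*π*α^2*s^3/3) * w₂ u) ((continuous_const.mul hw₁c :
        Continuous (fun u => (4*π*α*s^3) * w₁ u)).intervalIntegrable _ _)
      ((continuous_const.mul hw₂c :
        Continuous (fun u => (2*π*α^2*s^3/3) * w₂ u)).intervalIntegrable _ _),
      intervalIntegral.integral_const_mul, intervalIntegral.integral_const_mul]
    rw [← hI₁def, ← hI₂def]
    ring
  have hupval : (∫ r in (0:ℝ)..s, upf r) = (π*α^2*I₂) * s^4 := by
    have hfun : upf = fun r => ((fun u => (π*α^2*s^3) * w₂ u) (r/s)) := by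
      funext r
      rw [hupdef, hw₂def]
      field_simp
    rw [hfun, integral_scale _ s hs0, intervalIntegral.integral_const_mul, ← hI₂def]
    ring
  -- conclude
  constructor
  · rw [hcongr]
    have hmono := intervalIntegral.integral_mono_on hs0.le hlowint hEint hlowle
    rw [hlowval] at hmono
    have hceq : 2*π*α*(-I₁) * s^4 = 4*π*α*s^4*I₁ + (2*π*α^2*s^4/3)*I₂ := by
      linear_combination (-(2*π*α*s^4)/3) * hαI₂
    linarith [hmono, hceq.le, hceq.ge]
  · rw [hcongr]
    have hmono := intervalIntegral.integral_mono_on hs0.le hEint hupint huple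
    rw [hupval] at hmono
    linarith
end

section
/- There is a universal constant c₀ > 0 with the following property. Let Q ⊂ ℝ² be a closed square of side length ℓ ∈ (0, 1], and let u : Q → ℝ² be of class C¹ with |u(y)| ≤ 1 for all y ∈ Q and |u(y)|² ≥ 1/5 for all y ∈ ∂Q. If ∫_Q |Du|² ≤ c₀ ℓ², then the Lebesgue measure of the set { y ∈ Q : |u(y)|² < 1/6 } is at most ℓ²/2. -/
/-!
Along each vertical segment of the square, `‖u‖²` is at least `1/5` at the bottom edge. If it
drops below `1/6` somewhere on the segment then, since `‖u‖ ≤ 1` makes `‖u‖²` 2-Lipschitz in `u`,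
`∫ ‖∂ₜu‖ ≥ 1/60` along the segment, and Cauchy–Schwarz gives `∫ ‖∂ₜu‖² ≥ 1/(3600 ℓ)`: a
one-dimensional Poincaré inequality for `(1/5 - ‖u‖²)₊`. Hence each segment meets the small set
in length at most `ℓ ≤ 3600 ℓ² ∫ ‖∂ₜu‖²`, and Fubini bounds its area by
`3600 ℓ² ∫_Q |Du|² ≤ ℓ⁴/2 ≤ ℓ²/2` when `c₀ = 1/7200`.
-/

open MeasureTheory Set

open scoped ENNReal

local notation "ℝ²" => EuclideanSpace ℝ (Fin 2)

theorem abs_sq_norm_sub_sq_norm_le {E : Type*} [NormedAddCommGroup E] {x y : E}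
    (hx : ‖x‖ ≤ 1) (hy : ‖y‖ ≤ 1) : |‖x‖ ^ 2 - ‖y‖ ^ 2| ≤ 2 * ‖x - y‖ :=
  calc |‖x‖ ^ 2 - ‖y‖ ^ 2| = |‖x‖ - ‖y‖| * (‖x‖ + ‖y‖) := by
        rw [show ‖x‖ ^ 2 - ‖y‖ ^ 2 = (‖x‖ - ‖y‖) * (‖x‖ + ‖y‖) by ring, abs_mul,
          abs_of_nonneg (by positivity : 0 ≤ ‖x‖ + ‖y‖)]
    _ ≤ ‖x - y‖ * 2 := by gcongr; exacts [abs_norm_sub_norm_le x y, by linarith]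
    _ = 2 * ‖x - y‖ := mul_comm _ _

theorem sq_integral_le_measureReal_univ_mul_integral_sq {α : Type*} [MeasurableSpace α]
    {μ : Measure α} [IsFiniteMeasure μ] {g : α → ℝ} (hg : Integrable g μ)
    (hg2 : Integrable (fun x => g x ^ 2) μ) :
    (∫ x, g x ∂μ) ^ 2 ≤ μ.real univ * ∫ x, g x ^ 2 ∂μ := by
  have hquad (c : ℝ) :
      0 ≤ μ.real univ * (c * c) + (-2 * ∫ x, g x ∂μ) * c + ∫ x, g x ^ 2 ∂μ := by
    have hexpand : ∫ x, (c - g x) ^ 2 ∂μ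
        = μ.real univ * (c * c) + (-2 * ∫ x, g x ∂μ) * c + ∫ x, g x ^ 2 ∂μ := by
      simp_rw [sub_sq]
      have hlin : Integrable (fun x => c ^ 2 - 2 * c * g x) μ :=
        (integrable_const _).sub (hg.const_mul _)
      rw [integral_add hlin hg2, integral_sub (integrable_const _) (hg.const_mul _),
        integral_const, integral_const_mul]
      simp only [smul_eq_mul]
      ring
    exact hexpand ▸ integral_nonneg fun x => sq_nonneg _
  have := discrim_le_zero hquad
  unfold discrim at this
  nlinarith

section Interval

variable {E : Type*} [NormedAddCommGroup E] [NormedSpace ℝ E] {f f' : ℝ → E} {a b t : ℝ}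

theorem norm_sub_le_setIntegral_norm_deriv
    (hf : ∀ s ∈ Icc a b, HasDerivWithinAt f (f' s) (Icc a b) s)
    (hf' : ContinuousOn f' (Icc a b)) (ht : t ∈ Icc a b) :
    ‖f t - f a‖ ≤ ∫ s in Icc a b, ‖f' s‖ := by
  have hsub : Icc a t ⊆ Icc a b := Icc_subset_Icc_right ht.2
  have hderiv (s : ℝ) (hs : s ∈ Ioo a t) : HasDerivAt f (f' s) s :=
    (hf s (hsub (Ioo_subset_Icc_self hs))).hasDerivAt
      (Icc_mem_nhds hs.1 (hs.2.trans_le ht.2))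
  have hint : IntegrableOn (fun s => ‖f' s‖) (Icc a b) :=
    hf'.norm.integrableOn_compact isCompact_Icc
  calc ‖f t - f a‖ ≤ ∫ s in a..t, ‖f' s‖ :=
        norm_sub_le_integral_of_norm_deriv_le_of_le ht.1
          (fun s hs => (hf s (hsub hs)).continuousWithinAt.mono hsub)
          (fun s hs => (hderiv s hs).differentiableAt.differentiableWithinAt)
          (ae_of_all _ fun s hs => (hderiv s hs).deriv ▸ le_rfl)
          ((intervalIntegrable_iff_integrableOn_Icc_of_le ht.1).2 (hint.mono_set hsub))
    _ = ∫ s in Ioc a t, ‖f' s‖ := intervalIntegral.integral_of_le ht.1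
    _ ≤ ∫ s in Icc a b, ‖f' s‖ :=
        setIntegral_mono_set hint (ae_of_all _ fun _ => norm_nonneg _)
          (Ioc_subset_Icc_self.trans hsub).eventuallyLE

theorem sq_sub_sq_norm_le_mul_setIntegral_norm_deriv_sq
    (hf : ∀ s ∈ Icc a b, HasDerivWithinAt f (f' s) (Icc a b) s)
    (hf' : ContinuousOn f' (Icc a b)) (hf1 : ∀ s ∈ Icc a b, ‖f s‖ ≤ 1) (ht : t ∈ Icc a b) :
    (‖f a‖ ^ 2 - ‖f t‖ ^ 2) ^ 2 ≤ 4 * (b - a) * ∫ s in Icc a b, ‖f' s‖ ^ 2 := by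
  have hab : a ≤ b := ht.1.trans ht.2
  have hdiff := abs_sq_norm_sub_sq_norm_le (hf1 a ⟨le_rfl, hab⟩) (hf1 t ht)
  have hdisp := norm_sub_le_setIntegral_norm_deriv hf hf' ht
  have hcs := sq_integral_le_measureReal_univ_mul_integral_sq
    (μ := volume.restrict (Icc a b)) (g := fun s => ‖f' s‖)
    (hf'.norm.integrableOn_compact isCompact_Icc)
    ((hf'.norm.pow 2).integrableOn_compact isCompact_Icc)
  rw [measureReal_restrict_apply_univ, Real.volume_real_Icc_of_le hab] at hcs
  rw [norm_sub_rev] at hdisp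
  calc (‖f a‖ ^ 2 - ‖f t‖ ^ 2) ^ 2 = |‖f a‖ ^ 2 - ‖f t‖ ^ 2| ^ 2 := (sq_abs _).symm
    _ ≤ (2 * ∫ s in Icc a b, ‖f' s‖) ^ 2 := by gcongr; linarith
    _ ≤ 4 * ((b - a) * ∫ s in Icc a b, ‖f' s‖ ^ 2) := by linarith
    _ = 4 * (b - a) * ∫ s in Icc a b, ‖f' s‖ ^ 2 := by ring

end Interval

theorem IsClosed.measurableSet_sep_lt {α : Type*} [TopologicalSpace α] [MeasurableSpace α]
    [OpensMeasurableSpace α] {s : Set α} (hs : IsClosed s) {f : α → ℝ} (hf : ContinuousOn f s)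
    (c : ℝ) : MeasurableSet {x ∈ s | f x < c} := by
  have : {x ∈ s | f x < c} = s \ (s ∩ f ⁻¹' Ici c) := by
    ext x; simp [and_comm]
  rw [this]
  exact hs.measurableSet.diff (hf.preimage_isClosed_of_isClosed hs isClosed_Ici).measurableSet

theorem MeasureTheory.Measure.prod_apply_le_mul_lintegral_of_slice_le {α β : Type*}
    [MeasurableSpace α] [MeasurableSpace β] {μ : Measure α} {ν : Measure β} [SFinite ν]
    {S : Set (α × β)} (hS : MeasurableSet S) {f : α × β → ℝ≥0∞} (hf : AEMeasurable f (μ.prod ν)) {C : ℝ≥0∞}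
    (h : ∀ x, ν (Prod.mk x ⁻¹' S) ≤ C * ∫⁻ y, f (x, y) ∂ν) :
    μ.prod ν S ≤ C * ∫⁻ z, f z ∂μ.prod ν := by
  rw [Measure.prod_apply hS, lintegral_prod f hf,
    ← lintegral_const_mul'' C hf.lintegral_prod_right']
  exact lintegral_mono h

noncomputable def planeEquiv : (ℝ × ℝ) ≃L[ℝ] ℝ² :=
  ((EuclideanSpace.equiv (Fin 2) ℝ).trans (ContinuousLinearEquiv.finTwoArrow ℝ ℝ)).symm

@[simp] theorem planeEquiv_apply_zero (z : ℝ × ℝ) : planeEquiv z 0 = z.1 := rfl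

@[simp] theorem planeEquiv_apply_one (z : ℝ × ℝ) : planeEquiv z 1 = z.2 := rfl

theorem measurePreserving_planeEquiv : MeasurePreserving planeEquiv :=
  (PiLp.volume_preserving_toLp (Fin 2)).comp (volume_preserving_finTwoArrow ℝ).symm

theorem hasDerivAt_planeEquiv_mk (x t : ℝ) :
    HasDerivAt (fun s => planeEquiv (x, s)) (EuclideanSpace.single 1 1) t := by
  have hline : HasDerivAt (fun s : ℝ => (x, s)) ((0 : ℝ), (1 : ℝ)) t :=
    (hasDerivAt_const t x).prodMk (hasDerivAt_id t)
  have hsingle : planeEquiv (0, 1) = EuclideanSpace.single 1 1 := by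
    ext i; fin_cases i <;> rfl
  rw [← hsingle]
  exact planeEquiv.hasFDerivAt.comp_hasDerivAt t hline

def square (p : ℝ²) (ℓ : ℝ) : Set (ℝ²) :=
  {y | ∀ i, p i ≤ y i ∧ y i ≤ p i + ℓ}

section Square

variable (p : ℝ²) {ℓ : ℝ}

theorem planeEquiv_preimage_square (ℓ : ℝ) :
    planeEquiv ⁻¹' square p ℓ = Icc (p 0) (p 0 + ℓ) ×ˢ Icc (p 1) (p 1 + ℓ) := by
  ext z
  simp only [square, mem_preimage, mem_ofPred_eq, Fin.forall_fin_two, mem_prod, mem_Icc,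
    planeEquiv_apply_zero, planeEquiv_apply_one]

theorem planeEquiv_mem_square {x t : ℝ} (hx : x ∈ Icc (p 0) (p 0 + ℓ))
    (ht : t ∈ Icc (p 1) (p 1 + ℓ)) : planeEquiv (x, t) ∈ square p ℓ := by
  rw [← mem_preimage, planeEquiv_preimage_square]
  exact ⟨hx, ht⟩

theorem isClosed_square (ℓ : ℝ) : IsClosed (square p ℓ) := by
  rw [← planeEquiv.toHomeomorph.isClosed_preimage]
  exact (planeEquiv_preimage_square p ℓ).symm ▸ isClosed_Icc.prod isClosed_Icc

theorem uniqueDiffOn_square (hℓ : 0 < ℓ) : UniqueDiffOn ℝ (square p ℓ) := by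
  rw [← planeEquiv.uniqueDiffOn_preimage_iff, planeEquiv_preimage_square]
  exact (uniqueDiffOn_Icc (by linarith)).prod (uniqueDiffOn_Icc (by linarith))

theorem planeEquiv_mem_frontier_square (hℓ : 0 ≤ ℓ) {x : ℝ} (hx : x ∈ Icc (p 0) (p 0 + ℓ)) :
    planeEquiv (x, p 1) ∈ frontier (square p ℓ) := by
  change (x, p 1) ∈ planeEquiv.toHomeomorph ⁻¹' frontier (square p ℓ)
  rw [Homeomorph.preimage_frontier]
  change (x, p 1) ∈ frontier (planeEquiv ⁻¹' square p ℓ)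
  rw [planeEquiv_preimage_square, frontier_prod_eq, frontier_Icc (by linarith), closure_Icc]
  exact Or.inl ⟨hx, Or.inl rfl⟩

end Square

noncomputable def gradNormSq (u : ℝ² → ℝ²) (s : Set (ℝ²)) (y : ℝ²) : ℝ :=
  ∑ j : Fin 2, ‖fderivWithin ℝ u s y (EuclideanSpace.single j 1)‖ ^ 2

section GradNormSq

variable {u : ℝ² → ℝ²} {s : Set (ℝ²)}

theorem gradNormSq_nonneg (y : ℝ²) :
    0 ≤ gradNormSq u s y :=
  Finset.sum_nonneg fun _ _ => sq_nonneg _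

theorem sq_norm_fderivWithin_single_le_gradNormSq (y : ℝ²) (j : Fin 2) :
    ‖fderivWithin ℝ u s y (EuclideanSpace.single j 1)‖ ^ 2 ≤ gradNormSq u s y :=
  Finset.single_le_sum (f := fun j => ‖fderivWithin ℝ u s y (EuclideanSpace.single j 1)‖ ^ 2)
    (fun _ _ => sq_nonneg _) (Finset.mem_univ j)

theorem ContDiffOn.continuousOn_gradNormSq (hu : ContDiffOn ℝ 1 u s)
    (hs : UniqueDiffOn ℝ s) : ContinuousOn (gradNormSq u s) s :=
  continuousOn_finsetSum _ fun _ _ =>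
    (((hu.continuousOn_fderivWithin hs le_rfl).clm_apply continuousOn_const).norm).pow 2

end GradNormSq

section SmallValues

variable (p : ℝ²) {ℓ α β : ℝ} {u : ℝ² → ℝ²}

theorem continuousOn_gradNormSq_planeEquiv (hℓ : 0 < ℓ)
    (hu : ContDiffOn ℝ 1 u (square p ℓ)) :
    ContinuousOn (fun z => gradNormSq u (square p ℓ) (planeEquiv z))
      (Icc (p 0) (p 0 + ℓ) ×ˢ Icc (p 1) (p 1 + ℓ)) :=
  (hu.continuousOn_gradNormSq (uniqueDiffOn_square p hℓ)).comp
    planeEquiv.continuous.continuousOn fun _ hz => planeEquiv_mem_square p hz.1 hz.2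

theorem sq_sub_le_mul_setIntegral_gradNormSq (hℓ : 0 < ℓ) (hβα : β ≤ α)
    (hu : ContDiffOn ℝ 1 u (square p ℓ)) (hu1 : ∀ y ∈ square p ℓ, ‖u y‖ ≤ 1)
    (hα : ∀ y ∈ frontier (square p ℓ), α ≤ ‖u y‖ ^ 2) {x t : ℝ}
    (hx : x ∈ Icc (p 0) (p 0 + ℓ)) (ht : t ∈ Icc (p 1) (p 1 + ℓ))
    (hβ : ‖u (planeEquiv (x, t))‖ ^ 2 < β) :
    (α - β) ^ 2 ≤
      4 * ℓ * ∫ s in Icc (p 1) (p 1 + ℓ), gradNormSq u (square p ℓ) (planeEquiv (x, s)) := by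
  have hmaps : MapsTo (fun s => planeEquiv (x, s)) (Icc (p 1) (p 1 + ℓ)) (square p ℓ) :=
    fun _ hs => planeEquiv_mem_square p hx hs
  have hderiv (s : ℝ) (hs : s ∈ Icc (p 1) (p 1 + ℓ)) :
      HasDerivWithinAt (fun s => u (planeEquiv (x, s)))
        (fderivWithin ℝ u (square p ℓ) (planeEquiv (x, s)) (EuclideanSpace.single 1 1))
        (Icc (p 1) (p 1 + ℓ)) s :=
    (hu.differentiableOn one_ne_zero _ (hmaps hs)).hasFDerivWithinAt.comp_hasDerivWithinAt s
      (hasDerivAt_planeEquiv_mk x s).hasDerivWithinAt hmaps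
  have hcont : ContinuousOn (fun s => gradNormSq u (square p ℓ) (planeEquiv (x, s)))
      (Icc (p 1) (p 1 + ℓ)) :=
    (continuousOn_gradNormSq_planeEquiv p hℓ hu).comp
      (Continuous.prodMk_right x).continuousOn fun _ hs => ⟨hx, hs⟩
  have hcont' : ContinuousOn
      (fun s => fderivWithin ℝ u (square p ℓ) (planeEquiv (x, s)) (EuclideanSpace.single 1 1))
      (Icc (p 1) (p 1 + ℓ)) :=
    ((hu.continuousOn_fderivWithin (uniqueDiffOn_square p hℓ) le_rfl).comp
      (planeEquiv.continuous.comp (Continuous.prodMk_right x)).continuousOn hmaps).clm_apply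
      continuousOn_const
  have hvar := sq_sub_sq_norm_le_mul_setIntegral_norm_deriv_sq hderiv hcont'
    (fun s hs => hu1 _ (hmaps hs)) ht
  have hmono : ∫ s in Icc (p 1) (p 1 + ℓ),
        ‖fderivWithin ℝ u (square p ℓ) (planeEquiv (x, s)) (EuclideanSpace.single 1 1)‖ ^ 2 ≤
      ∫ s in Icc (p 1) (p 1 + ℓ), gradNormSq u (square p ℓ) (planeEquiv (x, s)) :=
    setIntegral_mono_on ((hcont'.norm.pow 2).integrableOn_compact isCompact_Icc)
      (hcont.integrableOn_compact isCompact_Icc) measurableSet_Icc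
      fun s _ => sq_norm_fderivWithin_single_le_gradNormSq _ 1
  have hbottom : α ≤ ‖u (planeEquiv (x, p 1))‖ ^ 2 :=
    hα _ (planeEquiv_mem_frontier_square p hℓ.le hx)
  rw [add_sub_cancel_left] at hvar
  calc (α - β) ^ 2 ≤ (‖u (planeEquiv (x, p 1))‖ ^ 2 - ‖u (planeEquiv (x, t))‖ ^ 2) ^ 2 := by
        gcongr
    _ ≤ _ := hvar.trans (by gcongr)

theorem volume_restrict_slice_le (hℓ : 0 < ℓ) (hβα : β < α)
    (hu : ContDiffOn ℝ 1 u (square p ℓ)) (hu1 : ∀ y ∈ square p ℓ, ‖u y‖ ≤ 1)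
    (hα : ∀ y ∈ frontier (square p ℓ), α ≤ ‖u y‖ ^ 2) (x : ℝ) :
    volume.restrict (Icc (p 1) (p 1 + ℓ))
        (Prod.mk x ⁻¹' (planeEquiv ⁻¹' {y ∈ square p ℓ | ‖u y‖ ^ 2 < β})) ≤
      ENNReal.ofReal (4 * ℓ ^ 2 / (α - β) ^ 2) *
        ∫⁻ t in Icc (p 1) (p 1 + ℓ),
          ENNReal.ofReal (gradNormSq u (square p ℓ) (planeEquiv (x, t))) := by
  rcases eq_empty_or_nonempty (Prod.mk x ⁻¹' (planeEquiv ⁻¹' {y ∈ square p ℓ | ‖u y‖ ^ 2 < β}))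
    with hempty | ⟨t, hsq, hβ⟩
  · rw [hempty, measure_empty]
    exact zero_le
  obtain ⟨hx, ht⟩ : (x, t) ∈ Icc (p 0) (p 0 + ℓ) ×ˢ Icc (p 1) (p 1 + ℓ) := by
    rwa [← planeEquiv_preimage_square]
  have hvar := sq_sub_le_mul_setIntegral_gradNormSq p hℓ hβα.le hu hu1 hα hx ht hβ
  have hint : IntegrableOn (fun s => gradNormSq u (square p ℓ) (planeEquiv (x, s)))
      (Icc (p 1) (p 1 + ℓ)) :=
    ((continuousOn_gradNormSq_planeEquiv p hℓ hu).comp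
      (Continuous.prodMk_right x).continuousOn fun _ hs => ⟨hx, hs⟩).integrableOn_compact
      isCompact_Icc
  have hαβ : 0 < (α - β) ^ 2 := by nlinarith
  calc _ ≤ volume.restrict (Icc (p 1) (p 1 + ℓ)) univ := measure_mono (subset_univ _)
    _ = ENNReal.ofReal ℓ := by
        rw [Measure.restrict_apply_univ, Real.volume_Icc, add_sub_cancel_left]
    _ ≤ ENNReal.ofReal (4 * ℓ ^ 2 / (α - β) ^ 2 *
          ∫ s in Icc (p 1) (p 1 + ℓ), gradNormSq u (square p ℓ) (planeEquiv (x, s))) := by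
        refine ENNReal.ofReal_le_ofReal ?_
        rw [div_mul_eq_mul_div, le_div_iff₀ hαβ]
        nlinarith
    _ = _ := by
        rw [ENNReal.ofReal_mul (by positivity),
          ofReal_integral_eq_lintegral_ofReal hint (ae_of_all _ fun _ => gradNormSq_nonneg _)]

theorem volume_sep_sq_norm_lt_le (hℓ : 0 < ℓ) (hβα : β < α)
    (hu : ContDiffOn ℝ 1 u (square p ℓ)) (hu1 : ∀ y ∈ square p ℓ, ‖u y‖ ≤ 1)
    (hα : ∀ y ∈ frontier (square p ℓ), α ≤ ‖u y‖ ^ 2) :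
    volume {y ∈ square p ℓ | ‖u y‖ ^ 2 < β} ≤
      ENNReal.ofReal (4 * ℓ ^ 2 / (α - β) ^ 2) *
        ENNReal.ofReal (∫ y in square p ℓ, gradNormSq u (square p ℓ) y) := by
  set S := {y ∈ square p ℓ | ‖u y‖ ^ 2 < β}
  have hS : MeasurableSet S :=
    (isClosed_square p ℓ).measurableSet_sep_lt (hu.continuousOn.norm.pow 2) β
  have hSR : planeEquiv ⁻¹' S ⊆ Icc (p 0) (p 0 + ℓ) ×ˢ Icc (p 1) (p 1 + ℓ) := fun _ hz =>
    planeEquiv_preimage_square p ℓ ▸ hz.1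
  have hrestrict :
      (volume.restrict (Icc (p 0) (p 0 + ℓ))).prod (volume.restrict (Icc (p 1) (p 1 + ℓ))) =
        volume.restrict (Icc (p 0) (p 0 + ℓ) ×ˢ Icc (p 1) (p 1 + ℓ)) := by
    rw [Measure.prod_restrict, ← Measure.volume_eq_prod]
  have hint : IntegrableOn (fun z => gradNormSq u (square p ℓ) (planeEquiv z))
      (Icc (p 0) (p 0 + ℓ) ×ˢ Icc (p 1) (p 1 + ℓ)) :=
    (continuousOn_gradNormSq_planeEquiv p hℓ hu).integrableOn_compact
      (isCompact_Icc.prod isCompact_Icc)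
  calc volume S = volume (planeEquiv ⁻¹' S) :=
        (measurePreserving_planeEquiv.measure_preimage hS.nullMeasurableSet).symm
    _ = (volume.restrict (Icc (p 0) (p 0 + ℓ))).prod (volume.restrict (Icc (p 1) (p 1 + ℓ)))
          (planeEquiv ⁻¹' S) := by
        rw [hrestrict, Measure.restrict_eq_self _ hSR]
    _ ≤ ENNReal.ofReal (4 * ℓ ^ 2 / (α - β) ^ 2) *
          ∫⁻ z, ENNReal.ofReal (gradNormSq u (square p ℓ) (planeEquiv z))
            ∂(volume.restrict (Icc (p 0) (p 0 + ℓ))).prod (volume.restrict (Icc (p 1) (p 1 + ℓ))) :=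
        Measure.prod_apply_le_mul_lintegral_of_slice_le
          (hS.preimage planeEquiv.continuous.measurable)
          (hrestrict ▸ hint.aestronglyMeasurable.aemeasurable.ennreal_ofReal)
          (volume_restrict_slice_le p hℓ hβα hu hu1 hα)
    _ = _ := by
        rw [hrestrict, ← ofReal_integral_eq_lintegral_ofReal hint
            (ae_of_all _ fun _ => gradNormSq_nonneg _),
          ← planeEquiv_preimage_square, measurePreserving_planeEquiv.setIntegral_preimage_emb
            planeEquiv.toHomeomorph.measurableEmbedding]

end SmallValues

/-- There is a universal constant `c₀ > 0` with the following property: for every closed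
square `Q ⊂ ℝ²` of side length `ℓ ∈ (0,1]` and every `C¹` map `u : Q → ℝ²` with `|u| ≤ 1`
on `Q` and `|u|² ≥ 1/5` on `∂Q`, if `∫_Q |Du|² ≤ c₀ ℓ²` then
`|{y ∈ Q : |u(y)|² < 1/6}| ≤ ℓ²/2`. -/
theorem measure_small_values_le :
    ∃ c₀ : ℝ, 0 < c₀ ∧
      ∀ ℓ : ℝ, 0 < ℓ → ℓ ≤ 1 →
      ∀ p : EuclideanSpace ℝ (Fin 2),
      ∀ u : EuclideanSpace ℝ (Fin 2) → EuclideanSpace ℝ (Fin 2),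
        (fun Q : Set (EuclideanSpace ℝ (Fin 2)) =>
          ContDiffOn ℝ 1 u Q →
          (∀ y ∈ Q, ‖u y‖ ≤ 1) →
          (∀ y ∈ frontier Q, (1 : ℝ) / 5 ≤ ‖u y‖ ^ 2) →
          (∫ y in Q,
              ∑ j : Fin 2, ‖fderivWithin ℝ u Q y (EuclideanSpace.single j (1 : ℝ))‖ ^ 2)
            ≤ c₀ * ℓ ^ 2 →
          volume {y ∈ Q | ‖u y‖ ^ 2 < 1 / 6} ≤ ENNReal.ofReal (ℓ ^ 2 / 2))
        {y : EuclideanSpace ℝ (Fin 2) | ∀ i, p i ≤ y i ∧ y i ≤ p i + ℓ} := by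
  refine ⟨1 / 7200, by norm_num, fun ℓ hℓ hℓ1 p u hu hu1 hα hDu => ?_⟩
  have hℓsq : ℓ ^ 2 ≤ 1 := pow_le_one₀ hℓ.le hℓ1
  calc volume {y ∈ square p ℓ | ‖u y‖ ^ 2 < 1 / 6}
      ≤ ENNReal.ofReal (4 * ℓ ^ 2 / (1 / 5 - 1 / 6) ^ 2) *
          ENNReal.ofReal (∫ y in square p ℓ, gradNormSq u (square p ℓ) y) :=
        volume_sep_sq_norm_lt_le p hℓ (by norm_num) hu hu1 hα
    _ ≤ ENNReal.ofReal (3600 * ℓ ^ 2) * ENNReal.ofReal (1 / 7200 * ℓ ^ 2) := by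
        rw [show (4 * ℓ ^ 2 / (1 / 5 - 1 / 6) ^ 2 : ℝ) = 3600 * ℓ ^ 2 by ring]
        gcongr
        exact hDu
    _ ≤ ENNReal.ofReal (ℓ ^ 2 / 2) := by
        rw [← ENNReal.ofReal_mul (by positivity)]
        exact ENNReal.ofReal_le_ofReal (by nlinarith)
end
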